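/- arXiv:1412.7669 — 6 statements merged into one kernel-verified Lean document; each statement's English description precedes it below -/
import Mathlib

section
/- Let X be a finite group and let G be a finite group having a normal subgroup K with G/K ≅ X, such that no proper subgroup of G involves X. Then K is nilpotent and every prime divisor of |K| divides |X|. -/
/-- A group `X` is involved in a group `G` if there are subgroups `N ⊴ K ≤ G`
with `K / N ≅ X`; equivalently, some subgroup of `G` surjects onto `X`. -/
def Involved (X G : Type*) [Group X] [Group G] : Prop :=
  ∃ (K : Subgroup G) (φ : K →* X), Function.Surjective φ

/-!
Minimality of `G` says that `K` has no proper supplement: a subgroup `H` with `H ⊔ K = ⊤`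
maps onto `G ⧸ K ≅ X`, so `H = G`. By the Frattini argument `G = N_G(P) K` for every Sylow
subgroup `P` of `K`, hence every such `P` is normal in `G`, and `K` is nilpotent. If a prime `q`
divides `|K|` but not `|G : K|`, a Sylow `q`-subgroup of `K` is a normal Sylow subgroup of `G`;
by Schur–Zassenhaus it has a complement, which supplements `K`, hence is all of `G`, a
contradiction.
-/

lemma Involved.of_surjective {X G : Type*} [Group X] [Group G] {f : G →* X}
    (hf : Function.Surjective f) : Involved X G :=
  ⟨⊤, f.comp (⊤ : Subgroup G).subtype, fun x ↦
    let ⟨g, hg⟩ := hf x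
    ⟨⟨g, trivial⟩, hg⟩⟩

lemma QuotientGroup.mk'_comp_subtype_surjective {G : Type*} [Group G] {K H : Subgroup G}
    [K.Normal] (h : H ⊔ K = ⊤) : Function.Surjective ((QuotientGroup.mk' K).comp H.subtype) := by
  rw [← MonoidHom.range_eq_top, MonoidHom.range_comp, H.range_subtype,
    ← (Subgroup.comap_injective (QuotientGroup.mk'_surjective K)).eq_iff,
    QuotientGroup.comap_map_mk', sup_comm, h, Subgroup.comap_top]

section NoProperSupplement

variable {G : Type*} [Group G] [Finite G] {K : Subgroup G}

lemma Sylow.map_subtype_normal_of_forall_sup_eq_top [K.Normal]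
    (hK : ∀ H : Subgroup G, H ⊔ K = ⊤ → H = ⊤) {p : ℕ} [Fact p.Prime] (P : Sylow p K) :
    (P.map K.subtype).Normal :=
  Subgroup.normalizer_eq_top_iff.mp (hK _ (Sylow.normalizer_sup_eq_top P))

lemma isNilpotent_of_forall_sup_eq_top [K.Normal] (hK : ∀ H : Subgroup G, H ⊔ K = ⊤ → H = ⊤) :
    Group.IsNilpotent K := by
  refine ((Group.isNilpotent_of_finite_tfae (G := K)).out 3 0).mp ?_
  intro p _ P
  have hP := (Sylow.map_subtype_normal_of_forall_sup_eq_top hK P).comap K.subtype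
  rwa [Subgroup.comap_map_eq_self_of_injective K.subtype_injective] at hP

lemma Sylow.eq_bot_of_normal_of_forall_sup_eq_top
    (hK : ∀ H : Subgroup G, H ⊔ K = ⊤ → H = ⊤) {p : ℕ} [Fact p.Prime] (P : Sylow p G)
    [(P : Subgroup G).Normal] (hPK : (P : Subgroup G) ≤ K) : (P : Subgroup G) = ⊥ := by
  obtain ⟨H, hH⟩ := Subgroup.exists_right_complement'_of_coprime P.card_coprime_index
  have hHK : H ⊔ K = ⊤ := eq_top_mono (sup_le_sup_left hPK H) (by rw [sup_comm, hH.sup_eq_top])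
  rwa [hK H hHK, Subgroup.isComplement'_top_right] at hH

lemma dvd_index_of_forall_sup_eq_top [K.Normal] (hK : ∀ H : Subgroup G, H ⊔ K = ⊤ → H = ⊤) {q : ℕ}
    (hq : q.Prime) (hdvd : q ∣ Nat.card K) : q ∣ K.index := by
  have : Fact q.Prime := ⟨hq⟩
  by_contra hndvd
  obtain ⟨Q⟩ : Nonempty (Sylow q K) := inferInstance
  have hindex : ¬ q ∣ (Q.map K.subtype).index := by
    rw [Subgroup.index_map_subtype]
    exact hq.not_dvd_mul Q.not_dvd_index hndvd
  let Q' : Sylow q G := (Q.isPGroup'.map K.subtype).toSylow hindex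
  have : (Q' : Subgroup G).Normal := Sylow.map_subtype_normal_of_forall_sup_eq_top hK Q
  have hQ' : (Q' : Subgroup G) = ⊥ :=
    Q'.eq_bot_of_normal_of_forall_sup_eq_top hK (Subgroup.map_subtype_le _)
  exact Q'.ne_bot_of_dvd_card (hdvd.trans K.card_subgroup_dvd_card) hQ'

end NoProperSupplement

/-- Let `X` be a finite group and let `G` be a finite group having a normal subgroup
`K` with `G / K ≅ X`, such that no proper subgroup of `G` involves `X`. Then `K` is
nilpotent and every prime divisor of `|K|` divides `|X|`. -/
theorem stmt4 (X G : Type) [Group X] [Finite X] [Group G] [Finite G]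
    (K : Subgroup G) [K.Normal] (hiso : Nonempty ((G ⧸ K) ≃* X))
    (hmin : ∀ H : Subgroup G, H ≠ ⊤ → ¬ Involved X ↥H) :
    Group.IsNilpotent ↥K ∧ ∀ q : ℕ, q.Prime → q ∣ Nat.card ↥K → q ∣ Nat.card X := by
  obtain ⟨e⟩ := hiso
  have hK : ∀ H : Subgroup G, H ⊔ K = ⊤ → H = ⊤ := fun H hH ↦ by
    by_contra hne
    exact hmin H hne (Involved.of_surjective (f := e.toMonoidHom.comp _)
      (e.surjective.comp (QuotientGroup.mk'_comp_subtype_surjective hH)))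
  refine ⟨isNilpotent_of_forall_sup_eq_top hK, fun q hq hdvd ↦ ?_⟩
  rw [← Nat.card_congr e.toEquiv]
  exact dvd_index_of_forall_sup_eq_top hK hq hdvd
end

section
/- Let d = r^f be a power of a prime r and let L be a 2-transitive subgroup of AΓL(1,d) acting on the field 𝔽_d of order d. Then L contains the translation subgroup V_d = { x ↦ x + u : u ∈ 𝔽_d }; consequently, with X = L ∩ AGL(1,d) and X_0 the stabiliser of 0 in X, one has X = V_d ⋊ X_0. -/
/-!
If `L ≤ AΓL(1,d)` contained no nontrivial translation, an element of `L` would be determined by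
its semilinear part `(α, σ) ∈ 𝔽_d^× × Aut 𝔽_d`, so `|L| ≤ (d - 1) |Aut 𝔽_d| ≤ (d - 1)²`; but
2-transitivity forces `|L| ≥ d (d - 1)`. Hence `L` contains a translation `x ↦ x + v` with
`v ≠ 0`, and conjugating it by the elements of `L₀`, which are additive and transitive on
`𝔽_d^×`, yields every translation. The decomposition `X = V_d ⋊ X₀` then holds for any subgroup
`X` of `AGL(1,d)` containing `V_d`.
-/

open Equiv MulAction

theorem Equiv.Perm.mul_addRight_mul_inv {A : Type*} [AddGroup A] (g : Perm A) {v w : A}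
    (h : ∀ x, g (x + v) = g x + w) : g * Equiv.addRight v * g⁻¹ = Equiv.addRight w :=
  Equiv.ext fun x => by simpa [Perm.mul_apply] using h (g⁻¹ x)

theorem Subgroup.inf_stabilizer_eq_bot {G α : Type*} [Group G] [MulAction G α] {V : Subgroup G}
    {a : α} (hfree : ∀ t ∈ V, t • a = a → t = 1) : V ⊓ stabilizer G a = ⊥ :=
  eq_bot_iff.2 fun t ⟨htV, hta⟩ => hfree t htV hta

theorem Subgroup.sup_inf_stabilizer_eq {G α : Type*} [Group G] [MulAction G α]
    {V X : Subgroup G} (a : α) (hVX : V ≤ X) (horbit : ∀ g ∈ X, ∃ t ∈ V, t • a = g • a) :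
    V ⊔ (X ⊓ stabilizer G a) = X := by
  refine le_antisymm (sup_le hVX inf_le_left) fun g hg => ?_
  obtain ⟨t, htV, hta⟩ := horbit g hg
  have hstab : t⁻¹ * g ∈ X ⊓ stabilizer G a := ⟨X.mul_mem (X.inv_mem (hVX htV)) hg,
    mem_stabilizer_iff.2 (by rw [mul_smul, ← hta, inv_smul_smul])⟩
  simpa using Subgroup.mul_mem_sup htV hstab

variable {F : Type*} [Field F]

def Equiv.Perm.IsSemiaffine (g : Perm F) : Prop :=
  ∃ (α : Fˣ) (σ : F ≃+* F) (u : F), ∀ x, g x = α * σ x + u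

theorem Equiv.Perm.IsSemiaffine.mul_addRight_mul_inv {g : Perm F} (hg : g.IsSemiaffine) (v : F) :
    g * Equiv.addRight v * g⁻¹ = Equiv.addRight (g v - g 0) := by
  obtain ⟨α, σ, u, hgx⟩ := hg
  refine g.mul_addRight_mul_inv fun x => ?_
  simp only [hgx, map_add, map_zero]
  ring

theorem addRight_mem_of_stabilizer_transitive {L : Subgroup (Perm F)}
    (hsemi : ∀ g ∈ L, g.IsSemiaffine)
    (h2trans : ∀ x y : F, x ≠ 0 → y ≠ 0 → ∃ g ∈ L, g 0 = 0 ∧ g x = y)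
    {v : F} (hv : v ≠ 0) (hvL : Equiv.addRight v ∈ L) (u : F) : Equiv.addRight u ∈ L := by
  rcases eq_or_ne u 0 with rfl | hu
  · exact Equiv.addRight_zero (α := F) ▸ L.one_mem
  obtain ⟨g, hgL, hg0, hgv⟩ := h2trans v u hv hu
  have hconj := (hsemi g hgL).mul_addRight_mul_inv v
  rw [hg0, hgv, sub_zero] at hconj
  exact hconj ▸ L.mul_mem (L.mul_mem hgL hvL) (L.inv_mem hgL)

section FiniteField

variable [Finite F]

instance : Finite (F ≃+* F) :=
  Finite.of_injective (fun σ : F ≃+* F => (σ : F → F)) DFunLike.coe_injective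

theorem FiniteField.card_ringEquiv_le_card_units : Nat.card (F ≃+* F) ≤ Nat.card Fˣ := by
  obtain ⟨ζ, hζ⟩ := IsCyclic.exists_generator (α := Fˣ)
  refine Nat.card_le_card_of_injective (fun σ => Units.map σ.toMonoidHom ζ) fun σ τ hστ => ?_
  have hζστ : σ ζ = τ ζ := congrArg Units.val hστ
  ext x
  rcases eq_or_ne x 0 with rfl | hx
  · simp
  obtain ⟨n, hn⟩ := Subgroup.mem_zpowers_iff.mp (hζ (Units.mk0 x hx))
  have hx : (ζ : F) ^ n = x := by simpa using congrArg Units.val hn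
  rw [← hx, map_zpow₀, map_zpow₀, hζστ]

variable {L : Subgroup (Perm F)}

theorem card_prod_units_le_card_of_twoTransitive (htrans : ∀ x y : F, ∃ g ∈ L, g x = y)
    (h2trans : ∀ x y : F, x ≠ 0 → y ≠ 0 → ∃ g ∈ L, g 0 = 0 ∧ g x = y) :
    Nat.card (F × Fˣ) ≤ Nat.card L := by
  refine Nat.card_le_card_of_surjective
    (fun g : L => ((g : Perm F) 0, Units.mk0 ((g : Perm F) 1 - (g : Perm F) 0)
      (sub_ne_zero.2 ((g : Perm F).injective.ne one_ne_zero)))) fun ⟨a, β⟩ => ?_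
  obtain ⟨k, hkL, hk0⟩ := htrans 0 a
  have hne : k⁻¹ (a + β) ≠ 0 := fun h => by
    simpa [← hk0] using (Perm.eq_inv_iff_eq.mp h.symm).symm
  obtain ⟨h, hhL, hh0, hh1⟩ := h2trans 1 _ one_ne_zero hne
  refine ⟨⟨k * h, L.mul_mem hkL hhL⟩, ?_⟩
  ext <;> simp [Perm.mul_apply, hh0, hh1, hk0]

theorem card_le_card_units_prod_of_no_translation (hsemi : ∀ g ∈ L, g.IsSemiaffine)
    (hnt : ∀ u : F, Equiv.addRight u ∈ L → u = 0) :
    Nat.card L ≤ Nat.card (Fˣ × (F ≃+* F)) := by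
  have hlinear : ∀ g : L, ∃ p : Fˣ × (F ≃+* F),
      ∀ x, (g : Perm F) x = p.1 * p.2 x + (g : Perm F) 0 := fun ⟨g, hg⟩ => by
    obtain ⟨α, σ, u, hgx⟩ := hsemi g hg
    exact ⟨(α, σ), fun x => by simp [hgx]⟩
  choose Φ hΦ using hlinear
  -- two elements with the same linear part differ by a translation, which must be trivial
  refine Nat.card_le_card_of_injective Φ fun g h hgh => ?_
  have hhg : (h : Perm F) = Equiv.addRight ((h : Perm F) 0 - (g : Perm F) 0) * g :=
    Equiv.ext fun x => by simp [Perm.mul_apply, hΦ h x, hΦ g x, hgh]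
  have h0 := hnt _ (eq_mul_inv_of_mul_eq hhg.symm ▸ L.mul_mem h.2 (L.inv_mem g.2))
  exact Subtype.ext (by simpa [h0] using hhg.symm)

theorem exists_addRight_mem_of_twoTransitive (hsemi : ∀ g ∈ L, g.IsSemiaffine)
    (htrans : ∀ x y : F, ∃ g ∈ L, g x = y)
    (h2trans : ∀ x y : F, x ≠ 0 → y ≠ 0 → ∃ g ∈ L, g 0 = 0 ∧ g x = y) :
    ∃ v ≠ 0, Equiv.addRight v ∈ L := by
  by_contra! hnt
  have hlower := card_prod_units_le_card_of_twoTransitive htrans h2trans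
  have hupper := card_le_card_units_prod_of_no_translation hsemi
    fun u hu => by_contra fun hu0 => hnt u hu0 hu
  have hAut := Nat.mul_le_mul_left (Nat.card Fˣ) (FiniteField.card_ringEquiv_le_card_units (F := F))
  have hunits : Nat.card Fˣ + 1 = Nat.card F := by
    have : 0 < Nat.card F := Nat.card_pos
    rw [Nat.card_units]; omega
  have hpos : 0 < Nat.card Fˣ := Nat.card_pos
  rw [Nat.card_prod] at hlower hupper
  nlinarith

end FiniteField

theorem stmt7_general (r f : ℕ) (hr : r.Prime)
    (F : Type) [Field F] (hcard : Nat.card F = r ^ f)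
    (AGammaL AGL Vd : Subgroup (Equiv.Perm F))
    (hAGammaL : ∀ π : Equiv.Perm F, π ∈ AGammaL ↔
      ∃ (α : Fˣ) (σ : F ≃+* F) (u : F), ∀ x : F, π x = ↑α * σ x + u)
    (hAGL : ∀ π : Equiv.Perm F, π ∈ AGL ↔
      ∃ (α : Fˣ) (u : F), ∀ x : F, π x = ↑α * x + u)
    (hVd : ∀ π : Equiv.Perm F, π ∈ Vd ↔ ∃ u : F, ∀ x : F, π x = x + u)
    (L : Subgroup (Equiv.Perm F)) (hLsub : L ≤ AGammaL)
    (hLtrans : ∀ x y : F, ∃ g ∈ L, g x = y)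
    (hL2trans : ∀ x y : F, x ≠ 0 → y ≠ 0 → ∃ g ∈ L, g 0 = 0 ∧ g x = y) :
    Vd ≤ L ∧
      Vd ≤ L ⊓ AGL ∧
      (∀ g ∈ L ⊓ AGL, ∀ t ∈ Vd, g * t * g⁻¹ ∈ Vd) ∧
      Vd ⊓ ((L ⊓ AGL) ⊓ MulAction.stabilizer (Equiv.Perm F) (0 : F)) = ⊥ ∧
      Vd ⊔ ((L ⊓ AGL) ⊓ MulAction.stabilizer (Equiv.Perm F) (0 : F)) = L ⊓ AGL := by
  have : Finite F := Nat.finite_of_card_ne_zero (hcard ▸ pow_ne_zero f hr.ne_zero)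
  have hsemi : ∀ g ∈ L, g.IsSemiaffine := fun g hg => (hAGammaL g).1 (hLsub hg)
  have hVd_range : ∀ π, π ∈ Vd ↔ ∃ u, Equiv.addRight u = π := fun π => (hVd π).trans
    ⟨fun ⟨u, h⟩ => ⟨u, Equiv.ext fun x => (h x).symm⟩, fun ⟨u, h⟩ => ⟨u, fun x => h ▸ rfl⟩⟩
  obtain ⟨v, hv, hvL⟩ := exists_addRight_mem_of_twoTransitive hsemi hLtrans hL2trans
  have hVL : Vd ≤ L := fun π hπ => by
    obtain ⟨u, rfl⟩ := (hVd_range π).1 hπ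
    exact addRight_mem_of_stabilizer_transitive hsemi hL2trans hv hvL u
  have hVAGL : Vd ≤ AGL := fun π hπ => by
    obtain ⟨u, rfl⟩ := (hVd_range π).1 hπ
    exact (hAGL _).2 ⟨1, u, fun x => by simp⟩
  have hVX : Vd ≤ L ⊓ AGL := le_inf hVL hVAGL
  refine ⟨hVL, hVX, ?_, ?_, ?_⟩
  · rintro g ⟨-, hg⟩ t ht
    obtain ⟨u, rfl⟩ := (hVd_range t).1 ht
    obtain ⟨α, w, hgx⟩ := (hAGL g).1 hg
    exact (hVd_range _).2
      ⟨_, (Perm.IsSemiaffine.mul_addRight_mul_inv ⟨α, RingEquiv.refl F, w, hgx⟩ u).symm⟩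
  · refine eq_bot_mono (inf_le_inf_left _ inf_le_right) (Subgroup.inf_stabilizer_eq_bot ?_)
    rintro t ht (ht0 : t 0 = 0)
    obtain ⟨u, rfl⟩ := (hVd_range t).1 ht
    rw [show u = 0 by simpa using ht0, Equiv.addRight_zero]
  · exact Subgroup.sup_inf_stabilizer_eq 0 hVX fun g _ =>
      ⟨Equiv.addRight (g 0), (hVd_range _).2 ⟨_, rfl⟩, by simp⟩

/-- Let `d = r ^ f` be a prime power and let `L` be a `2`-transitive subgroup of
`AΓL(1,d)` acting on the field `F` of order `d`. Then `L` contains the translation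
subgroup `V_d`; consequently, with `X = L ⊓ AGL(1,d)` and `X₀` the stabiliser of `0`
in `X`, one has `X = V_d ⋊ X₀` (internally: `V_d ≤ X`, `V_d` is normal in `X`,
`V_d ⊓ X₀ = ⊥` and `V_d ⊔ X₀ = X`). -/
theorem stmt7 (r f : ℕ) (hr : r.Prime) (hf : 0 < f)
    (F : Type) [Field F] (hcard : Nat.card F = r ^ f)
    (AGammaL AGL Vd : Subgroup (Equiv.Perm F))
    (hAGammaL : ∀ π : Equiv.Perm F, π ∈ AGammaL ↔
      ∃ (α : Fˣ) (σ : F ≃+* F) (u : F), ∀ x : F, π x = ↑α * σ x + u)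
    (hAGL : ∀ π : Equiv.Perm F, π ∈ AGL ↔
      ∃ (α : Fˣ) (u : F), ∀ x : F, π x = ↑α * x + u)
    (hVd : ∀ π : Equiv.Perm F, π ∈ Vd ↔ ∃ u : F, ∀ x : F, π x = x + u)
    (L : Subgroup (Equiv.Perm F)) (hLsub : L ≤ AGammaL)
    (hLtrans : ∀ x y : F, ∃ g ∈ L, g x = y)
    (hL2trans : ∀ x y : F, x ≠ 0 → y ≠ 0 → ∃ g ∈ L, g 0 = 0 ∧ g x = y) :
    Vd ≤ L ∧
      Vd ≤ L ⊓ AGL ∧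
      (∀ g ∈ L ⊓ AGL, ∀ t ∈ Vd, g * t * g⁻¹ ∈ Vd) ∧
      Vd ⊓ ((L ⊓ AGL) ⊓ MulAction.stabilizer (Equiv.Perm F) (0 : F)) = ⊥ ∧
      Vd ⊔ ((L ⊓ AGL) ⊓ MulAction.stabilizer (Equiv.Perm F) (0 : F)) = L ⊓ AGL :=
  stmt7_general r f hr F hcard AGammaL AGL Vd hAGammaL hAGL hVd L hLsub hLtrans hL2trans
end

section
/- Let d = r^f be a power of a prime r, and suppose it is not the case that r = 2 and 2 ≤ f ≤ 6. Then every element of ΓL(1,d) \ GL(1,d) has order at most (d−1)/f; that is, for every α ∈ 𝔽_d^× and every non-identity σ ∈ Gal(𝔽_{r^f}/𝔽_r), the permutation x ↦ α·σ(x) of 𝔽_d has order at most (r^f − 1)/f. -/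
/-!
Let `m ≥ 2` be the order of `σ` and `K` the fixed field of `σ`, so that `|K| = r ^ e` with
`e * m = f` (Artin). Then `π ^ m` is multiplication by the norm `∏_{j < m} σʲ α`, which lies in
`Kˣ`, so the order of `π` is at most `m * (r ^ e - 1)`. It remains to check the elementary
inequality `m * (r ^ e - 1) * f ≤ r ^ f - 1`, which holds whenever `r ≥ 3` or `f ≥ 7`.
-/

open Finset Subgroup

theorem Finset.prod_range_rotate {M : Type*} [CommMonoid M] (f : ℕ → M) {n : ℕ}
    (h : f n = f 0) : ∏ i ∈ range n, f (i + 1) = ∏ i ∈ range n, f i := by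
  cases n with
  | zero => rfl
  | succ n => rw [prod_range_succ, h, ← prod_range_succ']

instance RingEquiv.finite_left {R S : Type*} [Mul R] [Add R] [Mul S] [Add S] [Finite R] :
    Finite (R ≃+* S) :=
  Finite.of_injective RingEquiv.toMulEquiv fun _ _ h => RingEquiv.ext (MulEquiv.ext_iff.1 h)

theorem mul_le_pow_of_le {a c e₀ e : ℕ} (ha : 2 ≤ a) (he₀ : 1 ≤ e₀) (h₀ : e₀ * c ≤ a ^ e₀)
    (he : e₀ ≤ e) : e * c ≤ a ^ e := by
  induction e, he using Nat.le_induction with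
  | base => exact h₀
  | succ e he ih =>
    have hc : c ≤ a ^ e := (Nat.le_mul_of_pos_left c (by omega)).trans ih
    calc (e + 1) * c = e * c + c := by ring
      _ ≤ a ^ e * 2 := by omega
      _ ≤ a ^ (e + 1) := by rw [pow_succ]; exact Nat.mul_le_mul_left _ ha

theorem succ_sq_le_pow_of_le {a n₀ n : ℕ} (ha : 2 ≤ a) (hn₀ : 2 ≤ n₀)
    (h₀ : (n₀ + 1) ^ 2 ≤ a ^ n₀) (hn : n₀ ≤ n) : (n + 1) ^ 2 ≤ a ^ n := by
  induction n, hn using Nat.le_induction with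
  | base => exact h₀
  | succ n hn ih =>
    calc (n + 1 + 1) ^ 2 ≤ (n + 1) ^ 2 * 2 := by nlinarith
      _ ≤ a ^ n * 2 := by omega
      _ ≤ a ^ (n + 1) := by rw [pow_succ]; exact Nat.mul_le_mul_left _ ha

theorem mul_succ_sq_le_pow_mul_add_one_of_three_le {r e n : ℕ} (hr : 3 ≤ r) (he : 1 ≤ e)
    (hn : 1 ≤ n) : e * (n + 1) ^ 2 ≤ r ^ (n * e) + 1 := by
  rw [pow_mul]
  obtain rfl | hn := hn.eq_or_lt
  · simp only [pow_one, Nat.reduceAdd]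
    obtain rfl | he := he.eq_or_lt
    · simpa using hr
    · have := mul_le_pow_of_le (a := r) (c := 2 ^ 2) (e₀ := 2) (by omega) (by norm_num)
        (by nlinarith) he
      omega
  · have hsq : (n + 1) ^ 2 ≤ r ^ n :=
      (succ_sq_le_pow_of_le (a := 3) (by norm_num) le_rfl (by norm_num) hn).trans
        (Nat.pow_le_pow_left hr n)
    have hrn : 2 ≤ r ^ n := (Nat.le_self_pow (by omega) r).trans' (by omega)
    have := mul_le_pow_of_le hrn le_rfl (by simpa using hsq) he
    omega

theorem mul_succ_sq_le_two_pow_mul_add_one {e n : ℕ} (hn : 1 ≤ n) (h : 7 ≤ e * (n + 1)) :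
    e * (n + 1) ^ 2 ≤ 2 ^ (n * e) + 1 := by
  rw [pow_mul]
  suffices e * (n + 1) ^ 2 ≤ (2 ^ n) ^ e by omega
  obtain hn | hn := le_or_gt 6 n
  · have hsq := succ_sq_le_pow_of_le (a := 2) le_rfl (n₀ := 6) (by norm_num) (by norm_num) hn
    exact mul_le_pow_of_le (Nat.le_self_pow (by omega) 2) le_rfl (by simpa using hsq)
      (by nlinarith)
  · -- each `e₀` is the least `e` allowed by `h`
    interval_cases n
    · exact mul_le_pow_of_le (e₀ := 4) le_rfl (by norm_num) (by norm_num) (by omega)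
    · exact mul_le_pow_of_le (e₀ := 3) (by norm_num) (by norm_num) (by norm_num) (by omega)
    · exact mul_le_pow_of_le (e₀ := 2) (by norm_num) (by norm_num) (by norm_num) (by omega)
    · exact mul_le_pow_of_le (e₀ := 2) (by norm_num) (by norm_num) (by norm_num) (by omega)
    · exact mul_le_pow_of_le (e₀ := 2) (by norm_num) (by norm_num) (by norm_num) (by omega)

theorem mul_sub_one_le_pow_succ_sub_one {q n c : ℕ} (hn : 1 ≤ n) (h : c ≤ q ^ n + 1) :
    c * (q - 1) ≤ q ^ (n + 1) - 1 := by
  obtain rfl | hq := Nat.eq_zero_or_pos q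
  · simp
  have hqn : q ≤ q ^ n := Nat.le_self_pow (by omega) q
  calc c * (q - 1) ≤ (q ^ n + 1) * (q - 1) := Nat.mul_le_mul_right _ h
    _ ≤ q ^ (n + 1) - 1 := by
      zify [hq, Nat.one_le_pow (n + 1) q hq]
      push_cast [pow_succ]
      nlinarith

theorem mul_pow_sub_one_mul_le_pow_sub_one {r e m : ℕ} (hr : 2 ≤ r) (he : 1 ≤ e) (hm : 2 ≤ m)
    (h2 : r = 2 → 7 ≤ e * m) : m * (r ^ e - 1) * (e * m) ≤ r ^ (e * m) - 1 := by
  obtain ⟨n, rfl⟩ : ∃ n, m = n + 1 := ⟨m - 1, by omega⟩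
  have hsq : e * (n + 1) ^ 2 ≤ (r ^ e) ^ n + 1 := by
    rw [← pow_mul, mul_comm e n]
    rcases hr.lt_or_eq with hr3 | rfl
    · exact mul_succ_sq_le_pow_mul_add_one_of_three_le hr3 he (by omega)
    · exact mul_succ_sq_le_two_pow_mul_add_one (by omega) (h2 rfl)
  calc (n + 1) * (r ^ e - 1) * (e * (n + 1)) = e * (n + 1) ^ 2 * (r ^ e - 1) := by ring
    _ ≤ (r ^ e) ^ (n + 1) - 1 := mul_sub_one_le_pow_succ_sub_one (by omega) hsq
    _ = r ^ (e * (n + 1)) - 1 := by rw [pow_mul]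

section SemilinearPerm

variable {F : Type*} [CommSemiring F] (σ : F ≃+* F) (α : F) {π : Equiv.Perm F}

theorem pow_apply_eq_prod_mul (hπ : ∀ x, π x = α * σ x) (k : ℕ) (x : F) :
    (π ^ k) x = (∏ j ∈ range k, (σ ^ j) α) * (σ ^ k) x := by
  induction k generalizing x with
  | zero => simp
  | succ k ih =>
    rw [pow_succ, Equiv.Perm.mul_apply, ih, hπ, prod_range_succ, pow_succ, RingAut.mul_apply,
      map_mul]
    ring

theorem apply_prod_range_orderOf :
    σ (∏ j ∈ range (orderOf σ), (σ ^ j) α) = ∏ j ∈ range (orderOf σ), (σ ^ j) α := by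
  simp_rw [map_prod, ← RingAut.mul_apply, ← pow_succ']
  exact prod_range_rotate (fun j => (σ ^ j) α) (by rw [pow_orderOf_eq_one, pow_zero])

end SemilinearPerm

theorem mem_subfield_zpowers_of_apply_eq {F : Type*} [Field F] {σ : F ≃+* F} {x : F}
    (h : σ x = x) : x ∈ FixedPoints.subfield (zpowers σ) F := fun g =>
  (zpowers_le (H := MulAction.stabilizer (F ≃+* F) x)).2 h g.2

theorem natCard_eq_natCard_subfield_zpowers_pow {F : Type*} [Field F] [Finite F] (σ : F ≃+* F) :
    Nat.card F = Nat.card (FixedPoints.subfield (zpowers σ) F) ^ orderOf σ := by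
  cases nonempty_fintype (zpowers σ)
  rw [Module.natCard_eq_pow_finrank (K := FixedPoints.subfield (zpowers σ) F),
    FixedPoints.finrank_eq_card, ← Nat.card_eq_fintype_card, Nat.card_zpowers]

theorem exists_natCard_subfield_zpowers_eq_pow {F : Type*} [Field F] {r f : ℕ} (hr : r.Prime)
    (hcard : Nat.card F = r ^ f) (σ : F ≃+* F) :
    ∃ e, Nat.card (FixedPoints.subfield (zpowers σ) F) = r ^ e ∧ e * orderOf σ = f := by
  have : Finite F := Nat.finite_of_card_ne_zero (by simp [hcard, hr.ne_zero])
  have hKF := (natCard_eq_natCard_subfield_zpowers_pow σ).symm.trans hcard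
  obtain ⟨e, -, hKe⟩ := (Nat.dvd_prime_pow hr).1 (hKF ▸ dvd_pow_self _ (orderOf_pos σ).ne')
  exact ⟨e, hKe,
    Nat.pow_right_injective hr.two_le (show r ^ _ = r ^ f by rw [pow_mul, ← hKe, hKF])⟩

theorem pow_orderOf_mul_natCard_sub_one_eq_one {F : Type*} [Field F] [Finite F] (σ : F ≃+* F)
    (α : Fˣ) {π : Equiv.Perm F} (hπ : ∀ x, π x = α * σ x) :
    π ^ (orderOf σ * (Nat.card (FixedPoints.subfield (zpowers σ) F) - 1)) = 1 := by
  set K := FixedPoints.subfield (zpowers σ) F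
  set β := ∏ j ∈ range (orderOf σ), (σ ^ j) (α : F)
  have hβK : β ∈ K := mem_subfield_zpowers_of_apply_eq (apply_prod_range_orderOf σ α)
  have hβ0 : β ≠ 0 := prod_ne_zero_iff.2 fun j _ => (map_ne_zero (σ ^ j)).2 α.ne_zero
  have hβ : β ^ (Nat.card K - 1) = 1 := by
    have : Fintype K := Fintype.ofFinite K
    simpa [Subtype.ext_iff] using
      FiniteField.pow_card_sub_one_eq_one (⟨β, hβK⟩ : K) (ne_of_apply_ne Subtype.val hβ0)
  have hπm (x : F) : (π ^ orderOf σ) x = β * x := by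
    rw [pow_apply_eq_prod_mul σ α hπ, pow_orderOf_eq_one, RingAut.one_apply]
  ext x
  rw [pow_mul, pow_apply_eq_prod_mul 1 β hπm]
  simp [hβ]

theorem orderOf_le_orderOf_mul_natCard_sub_one {F : Type*} [Field F] [Finite F] (σ : F ≃+* F)
    (α : Fˣ) {π : Equiv.Perm F} (hπ : ∀ x, π x = α * σ x) :
    orderOf π ≤ orderOf σ * (Nat.card (FixedPoints.subfield (zpowers σ) F) - 1) := by
  have hK : 1 < Nat.card (FixedPoints.subfield (zpowers σ) F) := Finite.one_lt_card
  exact orderOf_le_of_pow_eq_one (Nat.mul_pos (orderOf_pos σ) (by omega))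
    (pow_orderOf_mul_natCard_sub_one_eq_one σ α hπ)

theorem stmt9_general (r f : ℕ) (hr : r.Prime)
    (hnot : ¬ (r = 2 ∧ 2 ≤ f ∧ f ≤ 6))
    (F : Type) [Field F] (hcard : Nat.card F = r ^ f)
    (α : Fˣ) (σ : F ≃+* F) (hσ : σ ≠ RingEquiv.refl F)
    (π : Equiv.Perm F) (hπ : ∀ x : F, π x = ↑α * σ x) :
    (orderOf π : ℝ) ≤ ((r : ℝ) ^ f - 1) / f := by
  have : Finite F := Nat.finite_of_card_ne_zero (by simp [hcard, hr.ne_zero])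
  have hm : 2 ≤ orderOf σ := by
    have : orderOf σ ≠ 1 := by rwa [Ne, orderOf_eq_one_iff]
    have := orderOf_pos σ
    omega
  obtain ⟨e, hKe, rfl⟩ := exists_natCard_subfield_zpowers_eq_pow hr hcard σ
  have hK : 1 < Nat.card (FixedPoints.subfield (zpowers σ) F) := Finite.one_lt_card
  have he : 1 ≤ e := Nat.pos_of_ne_zero (by rintro rfl; simp [hKe] at hK)
  have hmf : orderOf σ ≤ e * orderOf σ := Nat.le_mul_of_pos_left _ he
  have hnat : orderOf π * (e * orderOf σ) ≤ r ^ (e * orderOf σ) - 1 :=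
    (Nat.mul_le_mul_right _ (hKe ▸ orderOf_le_orderOf_mul_natCard_sub_one σ α hπ)).trans
      (mul_pow_sub_one_mul_le_pow_sub_one hr.two_le he hm fun h2 => by omega)
  rw [le_div_iff₀ (by positivity)]
  have := Nat.one_le_pow (e * orderOf σ) r hr.pos
  exact_mod_cast hnat

/-- Let `d = r ^ f` be a prime power with not (`r = 2` and `2 ≤ f ≤ 6`), and let `F`
be the field of order `d`. For every `α ∈ Fˣ` and every non-identity field
automorphism `σ` of `F` (i.e. every element of `ΓL(1,d) \ GL(1,d)`), the permutation
`x ↦ α * σ x` of `F` has order at most `(r ^ f - 1) / f`. -/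
theorem stmt9 (r f : ℕ) (hr : r.Prime) (hf : 0 < f)
    (hnot : ¬ (r = 2 ∧ 2 ≤ f ∧ f ≤ 6))
    (F : Type) [Field F] (hcard : Nat.card F = r ^ f)
    (α : Fˣ) (σ : F ≃+* F) (hσ : σ ≠ RingEquiv.refl F)
    (π : Equiv.Perm F) (hπ : ∀ x : F, π x = ↑α * σ x) :
    (orderOf π : ℝ) ≤ ((r : ℝ) ^ f - 1) / f :=
  stmt9_general r f hr hnot F hcard α σ hσ π hπ
end

section
/- Let d = r^f be a power of a prime r and let L be a 2-transitive subgroup of AΓL(1,d) acting on the field 𝔽_d of order d. Let L_0 be the stabiliser of 0 in L and set X_0 = L_0 ∩ GL(1,d). Then every element of L_0 has order at most |X_0|. -/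
/-!
Each `g ∈ L₀` acts as `x ↦ g 1 * σ x` for a field automorphism `σ`, and `g ↦ σ` is a
homomorphism `L₀ → Aut F` with kernel `X₀`. Hence `s = |X₀|` divides `d - 1`, and since `L₀` is
transitive on `Fˣ`, `v = (d - 1) / s` divides the order of the image, hence divides `f`.
If `σ` has order `m` and its fixed field has `q = r ^ a` elements (so `a * m = f`), then `g ^ m`
is multiplication by a nonzero element fixed by `σ`, so `g ^ (m * (q - 1)) = 1`. The elementary
inequality `m * v * (q - 1) ≤ q ^ m - 1`, valid whenever `v ∣ a * m` and `v ∣ q ^ m - 1`, then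
gives `orderOf g ≤ m * (q - 1) ≤ s`.
-/

open Equiv

theorem sq_succ_le_two_pow_add_one {n : ℕ} (hn : 6 ≤ n) : (n + 1) ^ 2 ≤ 2 ^ n + 1 := by
  induction n, hn using Nat.le_induction with
  | base => norm_num
  | succ n hn ih => rw [pow_succ 2 n]; nlinarith

theorem sq_succ_le_pow_add_one {r n : ℕ} (hr : 2 ≤ r) (h : 3 ≤ r ∨ 6 ≤ n) :
    (n + 1) ^ 2 ≤ r ^ n + 1 := by
  rcases le_or_gt 6 n with hn | hn
  · exact (sq_succ_le_two_pow_add_one hn).trans (by gcongr)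
  · have key : (n + 1) ^ 2 ≤ 3 ^ n + 1 := by interval_cases n <;> norm_num
    exact key.trans (by gcongr; omega)

theorem mul_sq_mul_sub_one_le_pow_sub_one {q a m : ℕ} (hq : 1 ≤ q) (hm : 2 ≤ m)
    (h : a * m ^ 2 ≤ q ^ (m - 1) + 1) : a * m ^ 2 * (q - 1) ≤ q ^ m - 1 := by
  obtain ⟨k, rfl⟩ : ∃ k, m = k + 1 := ⟨m - 1, by omega⟩
  rw [Nat.add_sub_cancel] at h
  have hqk : q ≤ q ^ k := Nat.le_self_pow (by omega) q
  have hq' : 1 ≤ q ^ k * q := Nat.one_le_iff_ne_zero.mpr (by positivity)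
  rw [pow_succ q k]
  zify [hq, hq'] at h hqk ⊢
  nlinarith

theorem mul_mul_pow_sub_one_le {r a m v : ℕ} (hr : 2 ≤ r) (ha : 1 ≤ a) (hm : 2 ≤ m)
    (hva : v ∣ a * m) (hvr : v ∣ r ^ (a * m) - 1) : m * v * (r ^ a - 1) ≤ r ^ (a * m) - 1 := by
  have hv : v ≤ a * m := Nat.le_of_dvd (by positivity) hva
  obtain ⟨k, rfl⟩ : ∃ k, m = k + 1 := ⟨m - 1, by omega⟩
  by_cases hsmall : r = 2 ∧ a * k < 6
  · obtain ⟨rfl, hsmall⟩ := hsmall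
    -- the quadratic bound below fails here, so these finitely many cases are checked directly
    have hcheck : ∀ a < 6, ∀ m < 7, ∀ v < 11, 1 ≤ a → 2 ≤ m → v ∣ a * m →
        v ∣ 2 ^ (a * m) - 1 → m * v * (2 ^ a - 1) ≤ 2 ^ (a * m) - 1 := by
      set_option synthInstance.maxSize 1000 in decide
    exact hcheck a (by nlinarith) (k + 1) (by nlinarith) v (by nlinarith) ha hm hva hvr
  · have hbound : (a * k + 1) ^ 2 ≤ r ^ (a * k) + 1 :=
      sq_succ_le_pow_add_one hr (by omega)
    have hsq : a * (k + 1) ^ 2 ≤ (a * k + 1) ^ 2 := by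
      obtain ⟨b, rfl⟩ : ∃ b, a = b + 1 := ⟨a - 1, by omega⟩
      nlinarith [Nat.mul_le_mul_left b (show 1 ≤ (b + 1) * k ^ 2 by nlinarith)]
    rw [pow_mul] at hbound ⊢
    calc (k + 1) * v * (r ^ a - 1) ≤ a * (k + 1) ^ 2 * (r ^ a - 1) := by
          apply Nat.mul_le_mul_right; nlinarith
      _ ≤ (r ^ a) ^ (k + 1) - 1 :=
        mul_sq_mul_sub_one_le_pow_sub_one (Nat.one_le_pow _ _ (by omega)) hm (hsq.trans hbound)

theorem exists_eq_pow_mul_eq_of_pow_eq_prime_pow {r f k m : ℕ} (hr : r.Prime) (hm : m ≠ 0)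
    (h : k ^ m = r ^ f) : ∃ a, k = r ^ a ∧ a * m = f := by
  obtain ⟨a, -, rfl⟩ := (Nat.dvd_prime_pow hr).mp (h ▸ dvd_pow_self k hm)
  exact ⟨a, rfl, Nat.pow_right_injective hr.two_le (by simpa [pow_mul] using h)⟩

section FixedField

variable {F : Type*} [Field F] [Finite F]

instance inst_s10 : Finite (F ≃+* F) :=
  Finite.of_injective (fun σ : F ≃+* F => (σ : F → F)) DFunLike.coe_injective

theorem card_fixedPoints_pow_card (H : Subgroup (F ≃+* F)) :
    Nat.card (FixedPoints.subfield H F) ^ Nat.card H = Nat.card F := by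
  have : Fintype H := Fintype.ofFinite H
  rw [Module.natCard_eq_pow_finrank (K := FixedPoints.subfield H F) (V := F),
    FixedPoints.finrank_eq_card, ← Nat.card_eq_fintype_card]

theorem pow_card_sub_one_eq_one_of_apply_eq_self {σ : F ≃+* F} {β : F} (hβ : β ≠ 0)
    (hσβ : σ β = β) :
    β ^ (Nat.card (FixedPoints.subfield (Subgroup.zpowers σ) F) - 1) = 1 := by
  have hmem : β ∈ FixedPoints.subfield (Subgroup.zpowers σ) F := by
    have hle : Subgroup.zpowers σ ≤ MulAction.stabilizer (F ≃+* F) β :=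
      Subgroup.zpowers_le.mpr hσβ
    exact fun τ => hle τ.2
  have : Fintype (FixedPoints.subfield (Subgroup.zpowers σ) F) := Fintype.ofFinite _
  rw [Nat.card_eq_fintype_card]
  simpa using congrArg Subtype.val
    (FiniteField.pow_card_sub_one_eq_one (⟨β, hmem⟩ : FixedPoints.subfield _ F)
      (Subtype.coe_ne_coe.mp hβ))

end FixedField

section Semilinear

variable {F : Type*} [Field F]

def IsSemilinear (π : Perm F) : Prop := ∃ σ : F ≃+* F, ∀ x, π x = π 1 * σ x

namespace IsSemilinear

variable {π : Perm F}

theorem map_zero (h : IsSemilinear π) : π 0 = 0 := by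
  obtain ⟨σ, hσ⟩ := h
  rw [hσ, σ.map_zero, mul_zero]

theorem apply_one_ne_zero (h : IsSemilinear π) : π 1 ≠ 0 := fun h1 =>
  one_ne_zero (π.injective (h1.trans h.map_zero.symm))

theorem ringEquiv_unique (h : IsSemilinear π) {σ τ : F ≃+* F} (hσ : ∀ x, π x = π 1 * σ x)
    (hτ : ∀ x, π x = π 1 * τ x) : σ = τ :=
  RingEquiv.ext fun x => mul_left_cancel₀ h.apply_one_ne_zero ((hσ x).symm.trans (hτ x))

end IsSemilinear

variable {G : Subgroup (Perm F)} (hG : ∀ π ∈ G, IsSemilinear π)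

noncomputable def fieldAut : G →* (F ≃+* F) :=
  MonoidHom.mk' (fun π => (hG π π.2).choose) fun π ρ => by
    have hπ := (hG π π.2).choose_spec
    have hρ := (hG ρ ρ.2).choose_spec
    refine (hG _ (π * ρ).2).ringEquiv_unique (hG _ (π * ρ).2).choose_spec fun x => ?_
    change (π : Perm F) ((ρ : Perm F) x) = (π : Perm F) ((ρ : Perm F) 1) * _
    rw [hπ ((ρ : Perm F) x), hπ ((ρ : Perm F) 1), hρ x, map_mul, RingAut.mul_apply, mul_assoc]

theorem apply_eq_mul_fieldAut (π : G) (x : F) :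
    (π : Perm F) x = (π : Perm F) 1 * fieldAut hG π x :=
  (hG π π.2).choose_spec x

theorem mem_ker_fieldAut {π : G} :
    π ∈ (fieldAut hG).ker ↔ ∀ x, (π : Perm F) x = (π : Perm F) 1 * x := by
  refine ⟨fun h x => by simpa [MonoidHom.mem_ker.mp h] using apply_eq_mul_fieldAut hG π x,
    fun h => ?_⟩
  exact (hG π π.2).ringEquiv_unique (apply_eq_mul_fieldAut hG π) h

theorem fieldAut_apply_eq_self_of_commute {g h : G} (hh : h ∈ (fieldAut hG).ker)
    (hgh : Commute g h) : fieldAut hG g ((h : Perm F) 1) = (h : Perm F) 1 := by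
  have hcomm : (g : Perm F) ((h : Perm F) 1) = (h : Perm F) ((g : Perm F) 1) :=
    congrArg (fun k : G => (k : Perm F) 1) hgh.eq
  rw [apply_eq_mul_fieldAut hG g, (mem_ker_fieldAut hG).mp hh ((g : Perm F) 1),
    mul_comm ((h : Perm F) 1)] at hcomm
  exact mul_left_cancel₀ (hG g g.2).apply_one_ne_zero hcomm

noncomputable def kerToUnits : (fieldAut hG).ker →* Fˣ where
  toFun π := Units.mk0 ((π : Perm F) 1) (hG _ (π : G).2).apply_one_ne_zero
  map_one' := Units.ext rfl
  map_mul' π ρ := Units.ext <| by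
    change (π : Perm F) ((ρ : Perm F) 1) = (π : Perm F) 1 * (ρ : Perm F) 1
    exact (mem_ker_fieldAut hG).mp π.2 _

theorem kerToUnits_injective : Function.Injective (kerToUnits hG) := fun π ρ h => by
  have h1 : (π : Perm F) 1 = (ρ : Perm F) 1 := congrArg Units.val h
  ext x
  rw [(mem_ker_fieldAut hG).mp π.2, (mem_ker_fieldAut hG).mp ρ.2, h1]

theorem card_ker_fieldAut_dvd [Finite F] : Nat.card (fieldAut hG).ker ∣ Nat.card F - 1 :=
  Nat.card_units F ▸ Subgroup.card_dvd_of_injective _ (kerToUnits_injective hG)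

theorem card_sub_one_dvd_card [Finite F] (hG0 : ∀ π ∈ G, π 0 = 0)
    (htrans : ∀ y ≠ 0, ∃ π ∈ G, π 1 = y) :
    Nat.card F - 1 ∣ Nat.card G := by
  have horbit : MulAction.orbit G (1 : F) = {x | x ≠ 0} := by
    ext y
    refine ⟨?_, fun hy => ?_⟩
    · rintro ⟨π, rfl⟩
      exact fun h1 => one_ne_zero (π.1.injective (h1.trans (hG0 π π.2).symm))
    · obtain ⟨π, hπ, rfl⟩ := htrans y hy
      exact ⟨⟨π, hπ⟩, rfl⟩
  have hcard : Nat.card ({x | x ≠ 0} : Set F) = Nat.card F - 1 :=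
    (Nat.card_congr unitsEquivNeZero).symm.trans (Nat.card_units F)
  have := (MulAction.stabilizer G (1 : F)).index_dvd_card
  rwa [MulAction.index_stabilizer, horbit, ← Nat.card_coe_set_eq, hcard] at this

theorem orderOf_le_orderOf_fieldAut_mul [Finite F] (g : G) :
    orderOf g ≤ orderOf (fieldAut hG g) *
      (Nat.card (FixedPoints.subfield (Subgroup.zpowers (fieldAut hG g)) F) - 1) := by
  set σ := fieldAut hG g
  set k := Nat.card (FixedPoints.subfield (Subgroup.zpowers σ) F)
  have hker : g ^ orderOf σ ∈ (fieldAut hG).ker := by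
    rw [MonoidHom.mem_ker, map_pow, pow_orderOf_eq_one]
  set h : (fieldAut hG).ker := ⟨g ^ orderOf σ, hker⟩
  have hβ : (kerToUnits hG h : F) ^ (k - 1) = 1 :=
    pow_card_sub_one_eq_one_of_apply_eq_self (Units.ne_zero _)
      (fieldAut_apply_eq_self_of_commute hG hker (Commute.self_pow g _))
  have hh : h ^ (k - 1) = 1 :=
    kerToUnits_injective hG (by rw [map_pow, map_one]; exact Units.ext (by simpa using hβ))
  have hk : 1 < k := Finite.one_lt_card
  refine orderOf_le_of_pow_eq_one (Nat.mul_pos (orderOf_pos σ) (by omega)) ?_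
  rw [pow_mul]
  exact congrArg Subtype.val hh

theorem orderOf_le_card_ker_fieldAut [Finite F] (htrans : ∀ y ≠ 0, ∃ π ∈ G, π 1 = y) (g : G) :
    orderOf g ≤ Nat.card (fieldAut hG).ker := by
  have : Fintype F := Fintype.ofFinite F
  obtain ⟨r, -, ⟨f, hf⟩, hr, hcard⟩ := FiniteField.card' F
  rw [← Nat.card_eq_fintype_card, PNat.mk_coe] at hcard
  set s := Nat.card (fieldAut hG).ker
  obtain ⟨v, hsv⟩ := card_ker_fieldAut_dvd hG
  have hvf : v ∣ f := by
    have hdvd := card_sub_one_dvd_card (fun π hπ => (hG π hπ).map_zero) htrans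
    rw [← (fieldAut hG).ker.card_mul_index, Subgroup.index_ker, hsv] at hdvd
    obtain ⟨a, -, ha⟩ := exists_eq_pow_mul_eq_of_pow_eq_prime_pow hr Nat.card_pos.ne'
      ((card_fixedPoints_pow_card (fieldAut hG).range).trans hcard)
    exact (Nat.dvd_of_mul_dvd_mul_left Nat.card_pos hdvd).trans (Dvd.intro_left a ha)
  set σ := fieldAut hG g
  obtain hm | hm : orderOf σ = 1 ∨ 2 ≤ orderOf σ := by have := orderOf_pos σ; omega
  · have hker : g ∈ (fieldAut hG).ker := orderOf_eq_one_iff.mp hm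
    rw [← Subgroup.orderOf_mk g hker]
    exact orderOf_le_card ..
  · obtain ⟨a, hk, ham⟩ := exists_eq_pow_mul_eq_of_pow_eq_prime_pow hr (by omega)
      ((Nat.card_zpowers σ ▸ card_fixedPoints_pow_card (Subgroup.zpowers σ)).trans hcard)
    have hv : 0 < v := Nat.pos_of_ne_zero <| by
      rintro rfl
      have := Nat.one_lt_pow hf.ne' hr.one_lt
      omega
    refine (orderOf_le_orderOf_fieldAut_mul hG g).trans ?_
    rw [hk]
    refine Nat.le_of_mul_le_mul_right ?_ hv
    rw [← hsv, hcard, ← ham, mul_right_comm]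
    have ha : 1 ≤ a := Nat.pos_of_ne_zero fun ha => by simp [ha] at ham; omega
    have hvr : v ∣ r ^ (a * orderOf σ) - 1 := ⟨s, by rw [ham, ← hcard, hsv, mul_comm]⟩
    exact mul_mul_pow_sub_one_le hr.two_le ha hm (ham ▸ hvf) hvr

end Semilinear

theorem stmt10_general (r f : ℕ) (hr : r.Prime)
    (F : Type) [Field F] (hcard : Nat.card F = r ^ f)
    (AGammaL GL1 : Subgroup (Equiv.Perm F))
    (hAGammaL : ∀ π : Equiv.Perm F, π ∈ AGammaL ↔
      ∃ (α : Fˣ) (σ : F ≃+* F) (u : F), ∀ x : F, π x = ↑α * σ x + u)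
    (hGL1 : ∀ π : Equiv.Perm F, π ∈ GL1 ↔ ∃ α : Fˣ, ∀ x : F, π x = ↑α * x)
    (L : Subgroup (Equiv.Perm F)) (hLsub : L ≤ AGammaL)
    (hL2trans : ∀ x y : F, x ≠ 0 → y ≠ 0 → ∃ g ∈ L, g 0 = 0 ∧ g x = y) :
    ∀ g ∈ L ⊓ MulAction.stabilizer (Equiv.Perm F) (0 : F),
      orderOf g ≤
        Nat.card ↥((L ⊓ MulAction.stabilizer (Equiv.Perm F) (0 : F)) ⊓ GL1) := by
  have : Finite F := Nat.finite_of_card_ne_zero (hcard ▸ pow_ne_zero f hr.ne_zero)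
  set L₀ := L ⊓ MulAction.stabilizer (Equiv.Perm F) (0 : F)
  have hL₀0 : ∀ π ∈ L₀, π 0 = 0 := fun π hπ => hπ.2
  have hsemi : ∀ π ∈ L₀, IsSemilinear π := by
    intro π hπ
    obtain ⟨α, σ, u, hform⟩ := (hAGammaL π).1 (hLsub hπ.1)
    have hu : u = 0 := by simpa [hL₀0 π hπ] using (hform 0).symm
    exact ⟨σ, fun x => by simp [hform, hu]⟩
  have htrans : ∀ y ≠ 0, ∃ π ∈ L₀, π 1 = y := fun y hy => by
    obtain ⟨π, hπL, hπ0, hπ1⟩ := hL2trans 1 y one_ne_zero hy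
    exact ⟨π, ⟨hπL, hπ0⟩, hπ1⟩
  have hker : (fieldAut hsemi).ker = (L₀ ⊓ GL1).subgroupOf L₀ := by
    ext π
    rw [mem_ker_fieldAut, Subgroup.mem_subgroupOf, Subgroup.mem_inf, hGL1]
    refine ⟨fun h => ⟨π.2, Units.mk0 _ (hsemi π π.2).apply_one_ne_zero, h⟩,
      fun ⟨_, α, hα⟩ x => by rw [hα, hα 1, mul_one]⟩
  intro g hg
  rw [← Subgroup.orderOf_mk g hg,
    ← Nat.card_congr (Subgroup.subgroupOfEquivOfLe inf_le_left).toEquiv, ← hker]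
  exact orderOf_le_card_ker_fieldAut hsemi htrans _

/-- Let `d = r ^ f` be a prime power and let `L` be a `2`-transitive subgroup of
`AΓL(1,d)` acting on the field `F` of order `d`. Let `L₀` be the stabiliser of `0`
in `L` and `X₀ = L₀ ⊓ GL(1,d)`. Then every element of `L₀` has order at most `|X₀|`. -/
theorem stmt10 (r f : ℕ) (hr : r.Prime) (hf : 0 < f)
    (F : Type) [Field F] (hcard : Nat.card F = r ^ f)
    (AGammaL GL1 : Subgroup (Equiv.Perm F))
    (hAGammaL : ∀ π : Equiv.Perm F, π ∈ AGammaL ↔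
      ∃ (α : Fˣ) (σ : F ≃+* F) (u : F), ∀ x : F, π x = ↑α * σ x + u)
    (hGL1 : ∀ π : Equiv.Perm F, π ∈ GL1 ↔ ∃ α : Fˣ, ∀ x : F, π x = ↑α * x)
    (L : Subgroup (Equiv.Perm F)) (hLsub : L ≤ AGammaL)
    (hLtrans : ∀ x y : F, ∃ g ∈ L, g x = y)
    (hL2trans : ∀ x y : F, x ≠ 0 → y ≠ 0 → ∃ g ∈ L, g 0 = 0 ∧ g x = y) :
    ∀ g ∈ L ⊓ MulAction.stabilizer (Equiv.Perm F) (0 : F),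
      orderOf g ≤
        Nat.card ↥((L ⊓ MulAction.stabilizer (Equiv.Perm F) (0 : F)) ⊓ GL1) :=
  stmt10_general r f hr F hcard AGammaL GL1 hAGammaL hGL1 L hLsub hL2trans
end

section
/- Let d = r^f be a power of a prime r, let A be a subgroup of the multiplicative group 𝔽_d^×, and let X be the group of permutations of 𝔽_d of the form x ↦ a·x + u with a ∈ A and u ∈ 𝔽_d (so |X| = d·|A|). Let F be a field whose characteristic does not divide |X|, and let n be a positive integer such that X is isomorphic to a subgroup of GL(n,F). Then n ≥ |A|. -/
/-!
Restrict the representation to the translations `t_u : x ↦ x + u`. They commute, and their order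
divides `|F|`, which is invertible in the coefficient field; so over its algebraic closure they
are simultaneously diagonalisable, with weights that are additive characters of `F`, and
faithfulness gives a nontrivial weight `ψ`. The relation `t_u m_a⁻¹ = m_a⁻¹ t_{a u}` for the
dilation `m_a : x ↦ a x` shows that `m_a⁻¹` carries the `ψ`-weight space into the
`ψ(a ·)`-weight space. For `ψ ≠ 1` the characters `ψ(a ·)`, `a ∈ A`, are pairwise distinct, and
weight spaces of distinct characters are independent, so the dimension is at least `|A|`.
-/

open Module End

theorem Module.End.isSemisimple_of_pow_eq_one {K M : Type*} [Field K] [AddCommGroup M]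
    [Module K M] {f : End K M} {m : ℕ} (hm : (m : K) ≠ 0) (hf : f ^ m = 1) : f.IsSemisimple :=
  isSemisimple_of_squarefree_aeval_eq_zero
    (Polynomial.separable_X_pow_sub_C 1 hm one_ne_zero).squarefree (by simp [hf])

theorem iSupIndep.natCard_le_finrank {ι K M : Type*} [Field K] [AddCommGroup M] [Module K M]
    [FiniteDimensional K M] {p : ι → Submodule K M} (hp : iSupIndep p) (hne : ∀ i, p i ≠ ⊥) :
    Nat.card ι ≤ finrank K M := by
  choose v hvp hv0 using fun i ↦ (p i).ne_bot_iff.mp (hne i)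
  have hv := hp.linearIndependent p hvp hv0
  have := hv.finite
  have : Fintype ι := Fintype.ofFinite ι
  simpa only [Nat.card_eq_fintype_card] using hv.fintype_card_le_finrank

theorem Matrix.GeneralLinearGroup.exists_injective_toEnd (n : ℕ) (F' K : Type*) [Field F']
    [Field K] [Algebra F' K] :
    ∃ ι : Matrix.GeneralLinearGroup (Fin n) F' →* End K (Fin n → K), Function.Injective ι :=
  ⟨Matrix.toLinAlgEquiv'.toMonoidHom.comp
      ((algebraMap F' K).mapMatrix.toMonoidHom.comp (Units.coeHom _)),
    Matrix.toLinAlgEquiv'.injective.comp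
      ((Matrix.map_injective (algebraMap F' K).injective).comp Units.val_injective)⟩

namespace AddChar

theorem commute_apply {G N : Type*} [AddCommMonoid G] [Monoid N] (T : AddChar G N) (u v : G) :
    Commute (T u) (T v) := by
  rw [Commute, SemiconjBy, ← map_add_eq_mul, ← map_add_eq_mul, add_comm]

section WeightSpace

variable {G K M : Type*} [AddCommGroup G] [Field K] [AddCommGroup M] [Module K M]

def weightSpace (T : AddChar G (End K M)) (ψ : AddChar G K) : Submodule K M :=
  ⨅ u, (T u).eigenspace (ψ u)

variable (T : AddChar G (End K M))

theorem mem_weightSpace {ψ : AddChar G K} {w : M} :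
    w ∈ T.weightSpace ψ ↔ ∀ u, T u w = ψ u • w := by
  simp [weightSpace]

theorem iSupIndep_weightSpace : iSupIndep T.weightSpace := by
  have h := independent_iInf_maxGenEigenspace_of_forall_mapsTo (⇑T)
    fun u v μ ↦ mapsTo_maxGenEigenspace_of_comm (T.commute_apply v u) μ
  exact (h.comp DFunLike.coe_injective).mono fun ψ ↦
    iInf_mono fun u ↦ eigenspace_le_maxGenEigenspace

theorem exists_addChar_eq_of_iInf_eigenspace_ne_bot {χ : G → K}
    (hχ : ⨅ u, (T u).eigenspace (χ u) ≠ ⊥) : ∃ ψ : AddChar G K, ⇑ψ = χ := by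
  obtain ⟨w, hw, hw0⟩ := (Submodule.ne_bot_iff _).mp hχ
  simp only [Submodule.mem_iInf, mem_eigenspace_iff] at hw
  have hcancel : Function.Injective fun c : K ↦ c • w := smul_left_injective K hw0
  refine ⟨⟨χ, hcancel ?_, fun u v ↦ hcancel ?_⟩, rfl⟩
  · show χ 0 • w = 1 • w
    rw [← hw, map_zero_eq_one, one_smul, Module.End.one_apply]
  · show χ (u + v) • w = (χ u * χ v) • w
    rw [← hw, map_add_eq_mul, Module.End.mul_apply, hw, map_smul, hw, smul_smul, mul_comm]

theorem exists_weightSpace_ne_bot_of_apply_ne_one [IsAlgClosed K] [FiniteDimensional K M]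
    (hss : ∀ u, (T u).IsSemisimple) {u₀ : G} (hu₀ : T u₀ ≠ 1) :
    ∃ ψ : AddChar G K, ψ u₀ ≠ 1 ∧ T.weightSpace ψ ≠ ⊥ := by
  have htop : ⨆ χ : G → K, ⨅ u, (T u).eigenspace (χ u) = ⊤ := by
    simpa only [(hss _).isFinitelySemisimple.maxGenEigenspace_eq_eigenspace] using
      iSup_iInf_maxGenEigenspace_eq_top_of_iSup_maxGenEigenspace_eq_top_of_commute (⇑T)
        (fun u v _ ↦ T.commute_apply u v) fun u ↦ iSup_maxGenEigenspace_eq_top (T u)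
  by_contra! h
  refine hu₀ (LinearMap.ext fun w ↦ ?_)
  suffices w ∈ (T u₀).eigenspace 1 by simpa [mem_eigenspace_iff] using this
  refine (htop ▸ iSup_le fun χ ↦ ?_ : ⊤ ≤ (T u₀).eigenspace 1) Submodule.mem_top
  by_cases hχ : ⨅ u, (T u).eigenspace (χ u) = ⊥
  · exact hχ ▸ bot_le
  obtain ⟨ψ, rfl⟩ := T.exists_addChar_eq_of_iInf_eigenspace_ne_bot hχ
  by_contra hle
  exact hχ (h ψ fun h1 ↦ hle (h1 ▸ iInf_le _ u₀))

end WeightSpace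

theorem weightSpace_mulShift_ne_bot {R K M : Type*} [CommRing R] [Field K] [AddCommGroup M]
    [Module K M] (T : AddChar R (End K M)) {S : End K M} (hS : Function.Injective S) {c : R}
    (hTS : ∀ u, T u * S = S * T (c * u)) {ψ : AddChar R K} (hψ : T.weightSpace ψ ≠ ⊥) :
    T.weightSpace (ψ.mulShift c) ≠ ⊥ := by
  obtain ⟨w, hw, hw0⟩ := (Submodule.ne_bot_iff _).mp hψ
  refine (Submodule.ne_bot_iff _).mpr ⟨S w, T.mem_weightSpace.mpr fun u ↦ ?_, ?_⟩
  · rw [← Module.End.mul_apply, hTS, Module.End.mul_apply, T.mem_weightSpace.mp hw, map_smul,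
      mulShift_apply]
  · exact (map_ne_zero_iff S hS).mpr hw0

end AddChar

-- `Nat.card` of an infinite type is `0`, so `hF` also forces `F` to be finite.
theorem natCard_le_finrank_of_affine_representation {F K M G : Type*} [Field F] [Field K]
    [IsAlgClosed K] [AddCommGroup M] [Module K M] [FiniteDimensional K M] [Group G]
    (hF : (Nat.card F : K) ≠ 0) (ρ : G →* End K M) (t : AddChar F G) (ht : ρ.compAddChar t ≠ 1)
    {A : Subgroup Fˣ} (m : A → G) (hm : ∀ a u, m a * t u = t ((a : Fˣ) * u) * m a) :
    Nat.card A ≤ finrank K M := by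
  set T := ρ.compAddChar t
  obtain ⟨u₀, hu₀⟩ : ∃ u, T u ≠ 1 := by
    by_contra! h
    exact ht (DFunLike.ext _ _ h)
  have hss (u : F) : (T u).IsSemisimple := isSemisimple_of_pow_eq_one hF <| by
    rw [← AddChar.map_nsmul_eq_pow, card_nsmul_eq_zero', AddChar.map_zero_eq_one]
  obtain ⟨ψ, hψu₀, hψ⟩ := T.exists_weightSpace_ne_bot_of_apply_ne_one hss hu₀
  have hshift (a : A) : T.weightSpace (ψ.mulShift (a : Fˣ)) ≠ ⊥ := by
    refine T.weightSpace_mulShift_ne_bot (S := ρ (m a)⁻¹) ?_ (fun u ↦ ?_) hψ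
    · exact ((Module.End.isUnit_iff _).mp ((Group.isUnit _).map ρ)).injective
    · have : t u * (m a)⁻¹ = (m a)⁻¹ * t ((a : Fˣ) * u) := by
        rw [eq_inv_mul_iff_mul_eq, ← mul_assoc, hm, mul_inv_cancel_right]
      simp only [T, MonoidHom.compAddChar_apply, Function.comp_apply, ← map_mul, this]
  have hψ1 : ψ ≠ 1 := fun h ↦ hψu₀ (h ▸ AddChar.one_apply u₀)
  have hinj : Function.Injective fun a : A ↦ ψ.mulShift ((a : Fˣ) : F) :=
    (AddChar.to_mulShift_inj_of_isPrimitive (.of_ne_one hψ1)).comp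
      (Units.val_injective.comp Subtype.val_injective)
  exact (T.iSupIndep_weightSpace.comp hinj).natCard_le_finrank hshift

section AffineGroup

variable {F : Type*} [Field F] {A : Subgroup Fˣ} {X : Subgroup (Equiv.Perm F)}
  (hX : ∀ π : Equiv.Perm F, π ∈ X ↔ ∃ a ∈ A, ∃ u : F, ∀ x : F, π x = ↑a * x + u)
include hX

def translation : AddChar F X where
  toFun u := ⟨Equiv.addRight u, (hX _).mpr ⟨1, one_mem A, u, fun x ↦ by simp⟩⟩
  map_zero_eq_one' := by ext; simp
  map_add_eq_mul' u v := by ext; simp [add_assoc, add_comm u]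

def dilation (a : A) : X :=
  ⟨MulAction.toPerm (a : Fˣ), (hX _).mpr ⟨a, a.2, 0, fun x ↦ by simp [Units.smul_def]⟩⟩

theorem translation_injective : Function.Injective (translation hX) := fun u v h ↦ by
  simpa [translation] using congr_arg (fun π : X ↦ (π : Equiv.Perm F) 0) h

theorem dilation_mul_translation (a : A) (u : F) :
    dilation hX a * translation hX u = translation hX ((a : Fˣ) * u) * dilation hX a := by
  ext x
  simp [translation, dilation, Units.smul_def]

end AffineGroup

theorem stmt11_general
    (F : Type) [Field F]
    (A : Subgroup Fˣ)
    (X : Subgroup (Equiv.Perm F))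
    (hX : ∀ π : Equiv.Perm F, π ∈ X ↔ ∃ a ∈ A, ∃ u : F, ∀ x : F, π x = ↑a * x + u)
    (F' : Type) [Field F'] (hchar : ¬ (ringChar F' ∣ Nat.card ↥X))
    (n : ℕ)
    (φ : ↥X →* Matrix.GeneralLinearGroup (Fin n) F') (hφ : Function.Injective φ) :
    Nat.card ↥A ≤ n := by
  obtain ⟨ι, hι⟩ := Matrix.GeneralLinearGroup.exists_injective_toEnd n F' (AlgebraicClosure F')
  have hcard : Nat.card (Multiplicative F) ∣ Nat.card X :=
    Subgroup.card_dvd_of_injective (translation hX).toMonoidHom (translation_injective hX)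
  have hF : (Nat.card F : AlgebraicClosure F') ≠ 0 := by
    rw [← map_natCast (algebraMap F' _), map_ne_zero, ne_eq, ringChar.spec]
    exact fun h ↦ hchar (h.trans hcard)
  have ht : (ι.comp φ).compAddChar (translation hX) ≠ 1 := by
    intro h
    have h1 : translation hX 1 = translation hX 0 := by
      rw [AddChar.map_zero_eq_one, ← map_eq_one_iff (ι.comp φ) (hι.comp hφ)]
      exact DFunLike.congr_fun h 1
    exact one_ne_zero (translation_injective hX h1)
  simpa using natCard_le_finrank_of_affine_representation hF (ι.comp φ) (translation hX) ht
    (dilation hX) (dilation_mul_translation hX)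

/-- Let `d = r ^ f` be a prime power, `A` a subgroup of `Fˣ` for the field `F` of
order `d`, and `X` the group of permutations of `F` of the form `x ↦ a * x + u` with
`a ∈ A`, `u ∈ F`. If `F'` is a field whose characteristic does not divide `|X|` and
`X` is isomorphic to a subgroup of `GL(n, F')`, then `n ≥ |A|`. -/
theorem stmt11 (r f : ℕ) (hr : r.Prime) (hf : 0 < f)
    (F : Type) [Field F] (hcardF : Nat.card F = r ^ f)
    (A : Subgroup Fˣ)
    (X : Subgroup (Equiv.Perm F))
    (hX : ∀ π : Equiv.Perm F, π ∈ X ↔ ∃ a ∈ A, ∃ u : F, ∀ x : F, π x = ↑a * x + u)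
    (F' : Type) [Field F'] (hchar : ¬ (ringChar F' ∣ Nat.card ↥X))
    (n : ℕ) (hn : 0 < n)
    (φ : ↥X →* Matrix.GeneralLinearGroup (Fin n) F') (hφ : Function.Injective φ) :
    Nat.card ↥A ≤ n :=
  stmt11_general F A X hX F' hchar n φ hφ
end

section
/- There exists a function h : ℕ → ℕ with the following property. Let k, n and d be positive integers with d > h(n), let p be a prime, let Γ be a finite connected simple graph with exactly k·p^n vertices that is regular of valency d, and let G be a group of automorphisms of Γ acting transitively on the vertices. Suppose that for a vertex v the permutation group L = G_v^{Γ(v)} induced by G_v on the neighbourhood Γ(v) is 2-transitive and possesses an abelian regular normal subgroup (i.e., L is affine). Then p ≤ k·|G_v|. -/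
/-!
Take `h n = n + 1` and suppose `k * |G_v| < p`. As `|G| = k p^n |G_v|`, a Sylow `p`-subgroup `P`
has order `p ^ n`, has fewer than `p` conjugates (so it is normal) and meets no vertex stabiliser
(so it acts freely). `G` acts on the `𝔽_p`-space `A = P / Φ(P)`, and since `[G : P]` is prime to
`p`, averaging over coset representatives gives `ψ : V → A` with `ψ (π x) = π̄ + ψ x` for `π ∈ P`
and `ψ (g x) = g • ψ x + C g` for `g ∈ G`.

On sum-zero functions `f : Γ(v) → 𝔽_p` the map `f ↦ ∑ f u • ψ u` is then `G_v`-equivariant, and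
the sum-zero module is irreducible for the `2`-transitive group `L`, whose order is prime to `p`.
If the map is injective, `p ^ (d - 1) ≤ |A| ≤ p ^ n`, contradicting `d > n + 1`. Otherwise `ψ` is
constant on `Γ(v)`, say `ψ u = ψ v + c`, and following walks from `v` gives
`2 • (ψ (g v) - ψ v) = c - g • c`; for `g = π ∈ P` this says `2 • π̄ = 0`, impossible since `p` is
odd and `A ≠ 0`.
-/

open MulAction

theorem Sylow.normal_of_index_lt {G : Type*} [Group G] [Finite G] {p : ℕ} [Fact p.Prime]
    (P : Sylow p G) (h : (P : Subgroup G).index < p) : (P : Subgroup G).Normal := by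
  have hlt : Nat.card (Sylow p G) < p :=
    (Nat.le_of_dvd (Nat.pos_of_ne_zero (P : Subgroup G).index_ne_zero_of_finite)
      P.card_dvd_index).trans_lt h
  have hcard : Nat.card (Sylow p G) = 1 := by
    simpa [Nat.ModEq, Nat.mod_eq_of_lt hlt, Nat.mod_eq_of_lt (Fact.out : p.Prime).one_lt] using
      card_sylow_modEq_one p G
  rw [← Subgroup.normalizer_eq_top_iff, ← Subgroup.index_eq_one]
  exact P.card_eq_index_normalizer.symm.trans hcard

theorem Nat.Prime.pow_eq_pow_of_mul_eq_mul {p a b m n : ℕ} (hp : p.Prime) (ha : ¬ p ∣ a)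
    (hb : ¬ p ∣ b) (h : a * p ^ m = b * p ^ n) : m = n := by
  have hcop : ∀ {c} (j : ℕ), ¬ p ∣ c → (p ^ j).Coprime c := fun j hc =>
    ((hp.coprime_iff_not_dvd).mpr hc).pow_left j
  have hmn : p ^ m ∣ p ^ n := (hcop m hb).dvd_of_dvd_mul_left (h ▸ dvd_mul_left _ _)
  have hnm : p ^ n ∣ p ^ m := (hcop n ha).dvd_of_dvd_mul_left (h ▸ dvd_mul_left _ _)
  exact Nat.pow_right_injective hp.two_le (Nat.dvd_antisymm hmn hnm)

section Transitive

variable {G V : Type*} [Group G] [MulAction G V] [IsPretransitive G V]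

theorem card_mul_card_stabilizer (x : V) :
    Nat.card V * Nat.card (stabilizer G x) = Nat.card G := by
  rw [← index_stabilizer_of_transitive G x, Subgroup.index_mul_card]

theorem exists_normal_free_subgroup_of_mul_card_stabilizer_lt [Finite G] [Finite V] {p k n : ℕ}
    [hp : Fact p.Prime] (hV : Nat.card V = k * p ^ n) (v : V)
    (hlt : k * Nat.card (stabilizer G v) < p) :
    ∃ P : Subgroup G, P.Normal ∧ Nat.card P = p ^ n ∧ P.index.Coprime p ∧
      ∀ π : P, ∀ x : V, π • x = x → π = 1 := by
  have : Nonempty V := ⟨v⟩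
  set s := Nat.card (stabilizer G v)
  have hks : ¬ p ∣ k * s := by
    have : 0 < k * s := by
      have := (Nat.card_pos (α := V)).trans_eq hV
      exact Nat.mul_pos (Nat.pos_of_mul_pos_right this) Nat.card_pos
    exact fun hdvd => (Nat.le_of_dvd this hdvd).not_gt hlt
  obtain ⟨P⟩ : Nonempty (Sylow p G) := inferInstance
  obtain ⟨a, ha⟩ := IsPGroup.iff_card.mp P.isPGroup'
  have hindex : (P : Subgroup G).index * p ^ a = k * s * p ^ n := by
    rw [← ha, Subgroup.index_mul_card, ← card_mul_card_stabilizer v, hV]; ring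
  have han : a = n := hp.out.pow_eq_pow_of_mul_eq_mul P.not_dvd_index hks hindex
  subst han
  have hindex' : (P : Subgroup G).index = k * s :=
    Nat.eq_of_mul_eq_mul_right (pow_pos hp.out.pos _) hindex
  have hfree : ∀ x : V, Disjoint (P : Subgroup G) (stabilizer G x) := by
    intro x
    apply Subgroup.disjoint_of_coprime_natCard
    rw [ha, show Nat.card (stabilizer G x) = s from Nat.eq_of_mul_eq_mul_left Nat.card_pos
      ((card_mul_card_stabilizer x).trans (card_mul_card_stabilizer v).symm)]
    exact ((hp.out.coprime_iff_not_dvd).mpr fun h => hks (h.mul_left k)).pow_left _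
  refine ⟨P, P.normal_of_index_lt (hindex' ▸ hlt), ha, ?_, fun π x hπ => ?_⟩
  · exact hindex' ▸ ((hp.out.coprime_iff_not_dvd).mpr hks).symm
  · exact Subtype.ext <| Subgroup.disjoint_def.mp (hfree x) π.2 hπ

-- For a finite `p`-group this is the Frattini quotient `P / Φ(P)`.
def ModPAbelianization (P : Type*) [Group P] (p : ℕ) : Type _ :=
  Additive (Abelianization P ⧸ (powMonoidHom p : Abelianization P →* Abelianization P).range)

namespace ModPAbelianization

variable {P P' G : Type*} [Group P] [Group P'] [Group G] {p : ℕ}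

instance : AddCommGroup (ModPAbelianization P p) :=
  inferInstanceAs (AddCommGroup (Additive (Abelianization P ⧸ _)))

instance [Finite P] : Finite (ModPAbelianization P p) :=
  inferInstanceAs (Finite (Additive (Abelianization P ⧸ _)))

def of (x : P) : ModPAbelianization P p :=
  Additive.ofMul (QuotientGroup.mk (Abelianization.of x))

theorem of_mul (x y : P) : (of (x * y) : ModPAbelianization P p) = of x + of y := rfl

theorem of_one : (of 1 : ModPAbelianization P p) = 0 := rfl

theorem of_surjective : Function.Surjective (of : P → ModPAbelianization P p) := by
  intro a
  obtain ⟨q, rfl⟩ := QuotientGroup.mk_surjective (Additive.toMul a)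
  obtain ⟨x, rfl⟩ := QuotientGroup.mk_surjective q
  exact ⟨x, rfl⟩

theorem nsmul_eq_zero (a : ModPAbelianization P p) : p • a = 0 := by
  obtain ⟨x, rfl⟩ := of_surjective a
  exact (QuotientGroup.eq_one_iff _).mpr ⟨Abelianization.of x, rfl⟩

instance [NeZero p] : Module (ZMod p) (ModPAbelianization P p) :=
  AddCommGroup.zmodModule nsmul_eq_zero

theorem ext_hom {A : Type*} [AddMonoid A] {f g : ModPAbelianization P p →+ A}
    (h : ∀ x, f (of x) = g (of x)) : f = g :=
  AddMonoidHom.ext fun a => by obtain ⟨x, rfl⟩ := of_surjective a; exact h x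

def map (f : P →* P') : ModPAbelianization P p →+ ModPAbelianization P' p :=
  MonoidHom.toAdditive <| QuotientGroup.map _ _ (Abelianization.map f) <| by
    rintro _ ⟨y, rfl⟩
    exact ⟨Abelianization.map f y, (map_pow _ y p).symm⟩

theorem map_of (f : P →* P') (x : P) : map f (of x : ModPAbelianization P p) = of (f x) := rfl

def conjAct (H : Subgroup G) [H.Normal] : G →* AddMonoid.End (ModPAbelianization H p) where
  toFun g := map (MulAut.conjNormal g).toMonoidHom
  map_one' := ext_hom fun x => by simp [map_of]; rfl
  map_mul' g h := ext_hom fun x => by simp [map_of]; rfl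

instance (H : Subgroup G) [H.Normal] : DistribMulAction G (ModPAbelianization H p) :=
  DistribMulAction.compHom _ (conjAct H (p := p))

theorem smul_of {H : Subgroup G} [H.Normal] (g : G) (x : H) :
    g • (of x : ModPAbelianization H p) = of (MulAut.conjNormal g x) := rfl

theorem smul_eq_self_of_mem {H : Subgroup G} [H.Normal] (x : H) (a : ModPAbelianization H p) :
    (x : G) • a = a := by
  obtain ⟨y, rfl⟩ := of_surjective a
  rw [smul_of]
  have : MulAut.conjNormal (x : G) y = x * y * x⁻¹ := Subtype.ext (MulAut.conjNormal_apply _ _)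
  rw [this, of_mul, of_mul, add_right_comm, ← of_mul, mul_inv_cancel, of_one, zero_add]

theorem nontrivial [Finite P] [Nontrivial P] [Fact p.Prime] (hP : IsPGroup p P) :
    Nontrivial (ModPAbelianization P p) := by
  have := hP.isNilpotent
  have : Nontrivial (Abelianization P) :=
    QuotientGroup.nontrivial_iff.mpr (Group.IsSolvable.commutator_lt_top_of_nontrivial P).ne
  have hpcard : p ∣ Nat.card (Abelianization P) :=
    ((hP.of_surjective _ (QuotientGroup.mk'_surjective _)).card_eq_or_dvd).resolve_left
      (Finite.one_lt_card (α := Abelianization P)).ne'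
  obtain ⟨q, hq⟩ := exists_prime_orderOf_dvd_card' (G := Abelianization P) p hpcard
  have hq1 : q ≠ 1 := fun h => (Fact.out : p.Prime).one_lt.ne' (by rw [← hq, h, orderOf_one])
  have hpow : ¬ Function.Injective (powMonoidHom p : Abelianization P →* Abelianization P) :=
    fun hinj => hq1 (hinj (by simp [← hq, pow_orderOf_eq_one]))
  have hrange : (powMonoidHom p : Abelianization P →* Abelianization P).range ≠ ⊤ := fun htop =>
    hpow (Finite.injective_iff_surjective.mpr (MonoidHom.range_eq_top.mp htop))
  exact (QuotientGroup.nontrivial_iff.mpr hrange : Nontrivial (Abelianization P ⧸ _))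

end ModPAbelianization

theorem exists_coordinate_of_free {P V A : Type*} [Group P] [MulAction P V] [AddCommGroup A]
    (hfree : ∀ π : P, ∀ x : V, π • x = x → π = 1) (m : P → A)
    (hm : ∀ x y, m (x * y) = m x + m y) :
    ∃ ψ₀ : V → A, ∀ (π : P) (x : V), ψ₀ (π • x) = m π + ψ₀ x := by
  let o : V → V := fun x => Quotient.out (⟦x⟧ : orbitRel.Quotient P V)
  have ho : ∀ (π : P) (x : V), o (π • x) = o x := fun π x =>
    congrArg Quotient.out (Quotient.sound (mem_orbit x π))
  have hmem : ∀ x : V, ∃ ρ : P, ρ • o x = x := fun x => by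
    obtain ⟨ρ, hρ⟩ := Quotient.mk_out (s := orbitRel P V) x
    exact ⟨ρ⁻¹, inv_smul_eq_iff.mpr hρ.symm⟩
  choose t ht using hmem
  have hinj : ∀ (ρ ρ' : P) (y : V), ρ • y = ρ' • y → ρ = ρ' := fun ρ ρ' y h =>
    inv_mul_eq_one.mp (hfree _ y (by rw [mul_smul, ← h, inv_smul_smul]))
  refine ⟨fun x => m (t x), fun π x => ?_⟩
  show m (t (π • x)) = m π + m (t x)
  rw [← hm, hinj (t (π • x)) (π * t x) (o x) (by rw [mul_smul, ht, ← ho π, ht])]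

section Coordinate

variable {G V A : Type*} [Group G] [MulAction G V] [AddCommGroup A] [DistribMulAction G A]
  {P : Subgroup G} {m : P → A} {ψ₀ : V → A}

theorem smul_coordinate_smul_inv_smul [P.Normal]
    (hψ₀ : ∀ (π : P) (x : V), ψ₀ (π • x) = m π + ψ₀ x)
    (hmconj : ∀ (g : G) (x : P), m (MulAut.conjNormal g x) = g • m x) (r : G) (π : P) (x : V) :
    r • ψ₀ (r⁻¹ • π • x) = m π + r • ψ₀ (r⁻¹ • x) := by
  have : r⁻¹ • π • x = MulAut.conjNormal r⁻¹ π • r⁻¹ • x := by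
    rw [Subgroup.smul_def, Subgroup.smul_def, MulAut.conjNormal_apply, smul_smul, smul_smul,
      inv_inv, mul_inv_cancel_right]
  rw [this, hψ₀, smul_add, ← hmconj, ← MulAut.mul_apply, ← map_mul, mul_inv_cancel, map_one,
    MulAut.one_apply]

theorem smul_coordinate_smul_inv_smul_of_mul_eq
    (hψ₀ : ∀ (π : P) (x : V), ψ₀ (π • x) = m π + ψ₀ x)
    (htriv : ∀ (π : P) (a : A), (π : G) • a = a) {g r r' : G} {π : P} (h : r' * π = g * r)
    (x : V) : r' • ψ₀ (r'⁻¹ • g • x) = (g * r) • m π + g • r • ψ₀ (r⁻¹ • x) := by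
  have hr' : r' = g * r * (π : G)⁻¹ := eq_mul_inv_of_mul_eq h
  have hx : r'⁻¹ • g • x = π • r⁻¹ • x := by
    rw [hr', Subgroup.smul_def, smul_smul, smul_smul]
    group
  rw [hx, hψ₀, hr', mul_smul, ← Subgroup.coe_inv, htriv, smul_add, mul_smul g r (ψ₀ _)]

theorem exists_affine_equivariant [Finite G] [P.Normal]
    (hfree : ∀ π : P, ∀ x : V, π • x = x → π = 1) (hm : ∀ x y, m (x * y) = m x + m y)
    (hmconj : ∀ (g : G) (x : P), m (MulAut.conjNormal g x) = g • m x)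
    (htriv : ∀ (π : P) (a : A), (π : G) • a = a)
    (hindex : ∃ M : ℕ, ∀ a : A, (M * P.index) • a = a) :
    ∃ ψ : V → A, (∀ (π : P) (x : V), ψ (π • x) = m π + ψ x) ∧
      ∃ C : G → A, ∀ (g : G) (x : V), ψ (g • x) = g • ψ x + C g := by
  obtain ⟨ψ₀, hψ₀⟩ := exists_coordinate_of_free hfree m hm
  obtain ⟨M, hM⟩ := hindex
  have := Fintype.ofFinite (G ⧸ P)
  have hcard : Fintype.card (G ⧸ P) = P.index := Nat.card_eq_fintype_card.symm
  let r : G ⧸ P → G := Quotient.out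
  have hr : ∀ (g : G) (q : G ⧸ P), ∃ π : P, r (g • q) * π = g * r q := fun g q =>
    ⟨⟨_, QuotientGroup.eq.mp (by rw [QuotientGroup.out_eq', ← smul_eq_mul,
      ← MulAction.Quotient.smul_mk, QuotientGroup.out_eq'])⟩, mul_inv_cancel_left _ _⟩
  choose π hπ using hr
  -- Each translate `x ↦ r • ψ₀ (r⁻¹ • x)` obeys the `P`-rule, and changing the representative `r`
  -- of a coset only shifts it by a constant, so `M` times their sum is equivariant up to constants.
  refine ⟨fun x => M • ∑ q, r q • ψ₀ ((r q)⁻¹ • x), fun ρ x => ?_,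
    fun g => M • ∑ q, (g * r q) • m (π g q), fun g x => ?_⟩
  · simp only [smul_coordinate_smul_inv_smul hψ₀ hmconj, Finset.sum_add_distrib, Finset.sum_const,
      Finset.card_univ, hcard, nsmul_add, ← mul_nsmul', hM]
  · beta_reduce
    rw [← Equiv.sum_comp (MulAction.toPerm g)]
    simp only [MulAction.toPerm_apply]
    rw [Finset.sum_congr rfl fun q _ =>
      smul_coordinate_smul_inv_smul_of_mul_eq hψ₀ htriv (hπ g q) x]
    simp only [Finset.sum_add_distrib, ← Finset.smul_sum, smul_comm g M, nsmul_add, add_comm]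

end Coordinate

theorem card_dvd_card_of_transitive {X : Type*} {L : Subgroup (Equiv.Perm X)}
    (hL : ∀ a b : X, ∃ σ ∈ L, σ a = b) (a : X) : Nat.card X ∣ Nat.card L := by
  have : IsPretransitive L X := ⟨fun x y => by
    obtain ⟨σ, hσ, h⟩ := hL x y
    exact ⟨⟨σ, hσ⟩, h⟩⟩
  rw [← index_stabilizer_of_transitive L a]
  exact Subgroup.index_dvd_card _

section Augmentation

variable {X : Type*} [Fintype X] [DecidableEq X] {p : ℕ} [Fact p.Prime]
  {U : Submodule (ZMod p) (X → ZMod p)}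

theorem single_sub_single_mem_of_eqOn_compl {L : Subgroup (Equiv.Perm X)}
    (hL : ∀ a b : X, ∃ σ ∈ L, σ a = b) (hpX : ¬ p ∣ Fintype.card X)
    (hU : ∀ σ ∈ L, ∀ f ∈ U, f ∘ ⇑σ⁻¹ ∈ U) {F : X → ZMod p} (hFU : F ∈ U)
    (hsum : ∑ x, F x = 0) {a : X} (ha : F a ≠ 0) (hF : ∀ x y, x ≠ a → y ≠ a → F x = F y)
    (b : X) : Pi.single a 1 - Pi.single b 1 ∈ U := by
  rcases eq_or_ne b a with rfl | hba
  · simp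
  have hdiff : F a - F b = -((Fintype.card X : ZMod p) * F b) := by
    have hsplit : ∑ x, (F x - F b) = F a - F b :=
      Finset.sum_eq_single a (fun x _ hx => sub_eq_zero.mpr (hF x b hx hba)) (by simp)
    rw [← hsplit, Finset.sum_sub_distrib, hsum, Finset.sum_const, Finset.card_univ, nsmul_eq_mul,
      zero_sub]
  have hne : F a - F b ≠ 0 := by
    intro h0
    rw [h0, zero_eq_neg, mul_eq_zero, ZMod.natCast_eq_zero_iff] at hdiff
    exact ha (by simpa [hdiff.resolve_left hpX] using h0)
  obtain ⟨σ, hσL, hσ⟩ := hL a b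
  have hshift : F - F ∘ ⇑σ⁻¹ = (F a - F b) • (Pi.single a 1 - Pi.single b 1) := by
    ext x
    have hσx : σ.symm x = a ↔ x = b := by rw [Equiv.symm_apply_eq, hσ, eq_comm]
    by_cases hxa : x = a
    · subst hxa
      simp [hba.symm, hF (σ.symm x) b (fun h => hba (hσx.mp h).symm) hba]
    · by_cases hxb : x = b
      · subst hxb
        simp [hxa, hσx.mpr rfl]
      · simp [hxa, hxb, hF x (σ.symm x) hxa (fun h => hxb (hσx.mp h))]
  have := U.smul_mem (F a - F b)⁻¹ (U.sub_mem hFU (hU σ hσL F hFU))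
  rwa [hshift, smul_smul, inv_mul_cancel₀ hne, one_smul] at this

theorem exists_eqOn_compl_of_mem {L : Subgroup (Equiv.Perm X)}
    (hL2 : ∀ a b c : X, b ≠ a → c ≠ a → ∃ σ ∈ L, σ a = a ∧ σ b = c) (hpL : ¬ p ∣ Nat.card L)
    (hU : ∀ σ ∈ L, ∀ f ∈ U, f ∘ ⇑σ⁻¹ ∈ U) {f : X → ZMod p} (hfU : f ∈ U)
    (hsum : ∑ x, f x = 0) {a : X} (ha : f a ≠ 0) :
    ∃ F ∈ U, ∑ x, F x = 0 ∧ F a ≠ 0 ∧ ∀ x y, x ≠ a → y ≠ a → F x = F y := by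
  classical
  set S := stabilizer (Equiv.Perm X) a ⊓ L
  have hSa : ∀ σ : S, (σ : Equiv.Perm X) a = a := fun σ => (Subgroup.mem_inf.mp σ.2).1
  let F : X → ZMod p := ∑ σ : S, f ∘ ⇑(σ : Equiv.Perm X)⁻¹
  have hF : ∀ x, F x = ∑ σ : S, f ((σ : Equiv.Perm X)⁻¹ x) := fun x => Finset.sum_apply x _ _
  refine ⟨F, U.sum_mem fun σ _ => hU σ (Subgroup.mem_inf.mp σ.2).2 f hfU, ?_, ?_, ?_⟩
  · simp only [hF]
    rw [Finset.sum_comm]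
    exact Finset.sum_eq_zero fun σ _ => (Equiv.sum_comp _ f).trans hsum
  · have hS : ¬ p ∣ Nat.card S := fun h => hpL (h.trans (Subgroup.card_dvd_of_le inf_le_right))
    have hfix : ∀ σ : S, (σ : Equiv.Perm X)⁻¹ a = a := fun σ => by
      rw [Equiv.Perm.inv_eq_iff_eq, hSa]
    rw [hF, Finset.sum_congr rfl fun σ _ => by rw [hfix σ], Finset.sum_const, Finset.card_univ,
      ← Nat.card_eq_fintype_card, nsmul_eq_mul]
    exact mul_ne_zero ((ZMod.natCast_eq_zero_iff _ _).not.mpr hS) ha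
  · intro x y hx hy
    obtain ⟨σ₀, hσ₀L, hσ₀a, hσ₀x⟩ := hL2 a x y hx hy
    let s₀ : S := ⟨σ₀, Subgroup.mem_inf.mpr ⟨hσ₀a, hσ₀L⟩⟩
    rw [hF, hF, eq_comm, ← Equiv.sum_comp (Equiv.mulLeft s₀)]
    refine Finset.sum_congr rfl fun σ _ => ?_
    simp [s₀, mul_inv_rev, ← hσ₀x]

theorem single_sub_single_mem_of_isTwoTransitive {L : Subgroup (Equiv.Perm X)}
    (hL : ∀ a b : X, ∃ σ ∈ L, σ a = b)
    (hL2 : ∀ a b c : X, b ≠ a → c ≠ a → ∃ σ ∈ L, σ a = a ∧ σ b = c) (hpL : ¬ p ∣ Nat.card L)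
    (hU : ∀ σ ∈ L, ∀ f ∈ U, f ∘ ⇑σ⁻¹ ∈ U) {f : X → ZMod p} (hfU : f ∈ U)
    (hsum : ∑ x, f x = 0) (hf : f ≠ 0) (a b : X) : Pi.single a 1 - Pi.single b 1 ∈ U := by
  obtain ⟨a₀, ha₀⟩ := Function.ne_iff.mp hf
  have hpX : ¬ p ∣ Fintype.card X := fun h =>
    hpL (h.trans (Nat.card_eq_fintype_card (α := X) ▸ card_dvd_card_of_transitive hL a₀))
  obtain ⟨F, hFU, hFsum, hFa, hFconst⟩ := exists_eqOn_compl_of_mem hL2 hpL hU hfU hsum ha₀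
  have key := single_sub_single_mem_of_eqOn_compl hL hpX hU hFU hFsum hFa hFconst
  simpa using U.sub_mem (key b) (key a)

end Augmentation

theorem linearCombination_comp_inv {X R A : Type*} [Fintype X] [Semiring R] [AddCommMonoid A]
    [Module R A] {ψ : X → A} {σ : Equiv.Perm X} {α : A →ₗ[R] A} {c : A}
    (hψ : ∀ x, ψ (σ x) = α (ψ x) + c) {f : X → R} (hf : ∑ x, f x = 0) :
    Fintype.linearCombination R ψ (f ∘ ⇑σ⁻¹) = α (Fintype.linearCombination R ψ f) := by
  simp only [Fintype.linearCombination_apply, map_sum, map_smul, Function.comp_apply]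
  rw [← Equiv.sum_comp σ]
  simp only [Equiv.Perm.inv_def, Equiv.symm_apply_apply, hψ, smul_add, Finset.sum_add_distrib,
    ← Finset.sum_smul, hf, zero_smul, add_zero]

theorem pow_card_sub_one_le_card_of_injOn {X A : Type*} [Fintype X] {p : ℕ} [Fact p.Prime]
    [AddCommGroup A] [Module (ZMod p) A] [Finite A] {τ : (X → ZMod p) →ₗ[ZMod p] A}
    (hτ : ∀ f, ∑ x, f x = 0 → τ f = 0 → f = 0) : p ^ (Fintype.card X - 1) ≤ Nat.card A := by
  set sum := Fintype.linearCombination (ZMod p) fun _ : X => (1 : ZMod p)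
  set W := LinearMap.ker sum
  have hinj : Function.Injective (τ.comp W.subtype) := by
    rw [← LinearMap.ker_eq_bot, LinearMap.ker_comp, Submodule.eq_bot_iff]
    rintro ⟨w, hwW⟩ hw
    refine Subtype.ext (hτ w ?_ hw)
    simpa [W, sum, Fintype.linearCombination_apply] using hwW
  have hrank : Fintype.card X - 1 ≤ Module.finrank (ZMod p) W := by
    have h : Module.finrank (ZMod p) (LinearMap.range sum) + Module.finrank (ZMod p) W =
        Fintype.card X := by
      rw [← Module.finrank_fintype_fun_eq_card (ZMod p)]
      exact LinearMap.finrank_range_add_finrank_ker sum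
    have h1 := (Submodule.finrank_le (LinearMap.range sum)).trans_eq (Module.finrank_self (ZMod p))
    omega
  calc p ^ (Fintype.card X - 1) ≤ p ^ Module.finrank (ZMod p) W :=
        Nat.pow_le_pow_right (Fact.out : p.Prime).pos hrank
    _ = Nat.card W := by rw [Module.natCard_eq_pow_finrank (K := ZMod p), Nat.card_zmod]
    _ ≤ Nat.card A := Nat.card_le_card_of_injective _ hinj

theorem forall_eq_or_card_le_of_isTwoTransitive {X A : Type*} [Finite X] {p : ℕ} [Fact p.Prime]
    [AddCommGroup A] [Module (ZMod p) A] [Finite A] {L : Subgroup (Equiv.Perm X)}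
    (hL : ∀ a b : X, ∃ σ ∈ L, σ a = b)
    (hL2 : ∀ a b c : X, b ≠ a → c ≠ a → ∃ σ ∈ L, σ a = a ∧ σ b = c) (hpL : ¬ p ∣ Nat.card L)
    (ψ : X → A) (hψ : ∀ σ ∈ L, ∃ α : A →ₗ[ZMod p] A, ∃ c : A, ∀ x, ψ (σ x) = α (ψ x) + c) :
    (∀ a b, ψ a = ψ b) ∨ p ^ (Nat.card X - 1) ≤ Nat.card A := by
  classical
  have := Fintype.ofFinite X
  set τ := Fintype.linearCombination (ZMod p) ψ
  set sum := Fintype.linearCombination (ZMod p) fun _ : X => (1 : ZMod p)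
  have hsum : ∀ f, sum f = ∑ x, f x := fun f => by simp [sum, Fintype.linearCombination_apply]
  set U := LinearMap.ker τ ⊓ LinearMap.ker sum
  have hU : ∀ σ ∈ L, ∀ f ∈ U, f ∘ ⇑σ⁻¹ ∈ U := by
    intro σ hσ f hf
    simp only [U, Submodule.mem_inf, LinearMap.mem_ker, hsum] at hf ⊢
    obtain ⟨α, c, hαc⟩ := hψ σ hσ
    exact ⟨by rw [linearCombination_comp_inv hαc hf.2, hf.1, map_zero],
      (Equiv.sum_comp σ⁻¹ f).trans hf.2⟩
  by_cases hUbot : ∃ f ∈ U, f ≠ 0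
  · obtain ⟨f, hfU, hf⟩ := hUbot
    refine Or.inl fun a b => ?_
    have hab := single_sub_single_mem_of_isTwoTransitive hL hL2 hpL hU hfU
      ((hsum f).symm.trans (Submodule.mem_inf.mp hfU).2) hf a b
    have := LinearMap.mem_ker.mp (Submodule.mem_inf.mp hab).1
    simpa [τ, Fintype.linearCombination_apply, sub_smul, Pi.single_apply, sub_eq_zero] using this
  · push Not at hUbot
    refine Or.inr (Nat.card_eq_fintype_card (α := X) ▸ pow_card_sub_one_le_card_of_injOn
      fun f hf hτf => hUbot f (Submodule.mem_inf.mpr ⟨hτf, (hsum f).trans hf⟩))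

theorem two_nsmul_sub_eq_of_forall_adj {G V A : Type*} [Group G] [MulAction G V]
    [IsPretransitive G V] [AddCommGroup A] [DistribMulAction G A] {Γ : SimpleGraph V}
    (hconn : Γ.Preconnected) (hΓ : ∀ (g : G) (x y : V), Γ.Adj (g • x) (g • y) ↔ Γ.Adj x y)
    {ψ : V → A} {C : G → A} (hψ : ∀ (g : G) (x : V), ψ (g • x) = g • ψ x + C g) {v : V}
    {c : A} (hc : ∀ u, Γ.Adj v u → ψ u = ψ v + c) (hv : ∃ u, Γ.Adj v u) (g : G) :
    2 • (ψ (g • v) - ψ v) = c - g • c := by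
  have hedge : ∀ (h : G) (u : V), Γ.Adj (h • v) u → ψ u = ψ (h • v) + h • c := by
    intro h u hu
    have hadj : Γ.Adj v (h⁻¹ • u) := by rwa [← hΓ h, smul_inv_smul]
    rw [← smul_inv_smul h u, hψ, hc _ hadj, hψ, smul_add, add_right_comm]
  have hfix : ∀ h : G, h • v = v → h • c = c := by
    intro h hh
    obtain ⟨u, hu⟩ := hv
    have := hedge h u (by rwa [hh])
    rw [hh, hc u hu] at this
    exact (add_left_cancel this).symm
  suffices key : ∀ x, ∀ h : G, h • v = x → 2 • (ψ x - ψ v) = c - h • c from key _ g rfl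
  intro x
  induction (SimpleGraph.reachable_iff_reflTransGen v x).mp (hconn v x) with
  | refl => intro h hh; simp [hfix h hh]
  | @tail b y _ hby ih =>
    intro h' hh'
    obtain ⟨h, rfl⟩ := exists_smul_eq G v b
    have e1 := hedge h y hby
    have e2 := hedge h' (h • v) (by rw [hh']; exact hby.symm)
    have hneg : h' • c = -(h • c) := by
      rw [hh', e1, add_assoc, left_eq_add] at e2
      exact eq_neg_of_add_eq_zero_right e2
    rw [hneg, e1, add_sub_right_comm, nsmul_add, ih h rfl]
    abel

theorem card_le_card_stabilizer_of_forall_exists {G V : Type*} [Group G] [Finite G]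
    [MulAction G V] {v : V} {Y : Set V} {L : Subgroup (Equiv.Perm Y)}
    (hLG : ∀ σ ∈ L, ∃ g : G, g • v = v ∧ ∀ u : Y, (σ u : V) = g • (u : V)) :
    Nat.card L ≤ Nat.card (stabilizer G v) := by
  choose g hgv hg using fun σ : L => hLG σ σ.2
  refine Nat.card_le_card_of_injective (fun σ => ⟨g σ, hgv σ⟩) fun σ τ hστ => ?_
  have hστ' : g σ = g τ := congrArg Subtype.val hστ
  exact Subtype.ext <| Equiv.ext fun u => Subtype.ext <| by rw [hg, hg, hστ']

theorem exists_mul_nsmul_eq_self {p : ℕ} [Fact p.Prime] {A : Type*} [AddCommGroup A]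
    [Module (ZMod p) A] {m : ℕ} (hm : m.Coprime p) : ∃ M : ℕ, ∀ a : A, (M * m) • a = a := by
  have hm0 : (m : ZMod p) ≠ 0 := by
    rw [Ne, ZMod.natCast_eq_zero_iff]
    exact fun h => (Nat.Prime.coprime_iff_not_dvd Fact.out).mp hm.symm h
  refine ⟨((m : ZMod p)⁻¹).val, fun a => ?_⟩
  rw [← Nat.cast_smul_eq_nsmul (ZMod p), Nat.cast_mul, ZMod.natCast_zmod_val, inv_mul_cancel₀ hm0,
    one_smul]

theorem eq_zero_of_two_nsmul_eq_zero {p : ℕ} [Fact p.Prime] (hp : p ≠ 2) {A : Type*}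
    [AddCommGroup A] [Module (ZMod p) A] {a : A} (ha : 2 • a = 0) : a = 0 := by
  have h2 : ((2 : ℕ) : ZMod p) ≠ 0 := by
    rw [Ne, ZMod.natCast_eq_zero_iff]
    exact fun h => hp ((Nat.prime_dvd_prime_iff_eq Fact.out Nat.prime_two).mp h)
  rw [← Nat.cast_smul_eq_nsmul (ZMod p)] at ha
  exact (smul_eq_zero.mp ha).resolve_left h2

open ModPAbelianization in
theorem le_mul_card_stabilizer_of_isTwoTransitive {G V : Type*} [Group G] [Finite G]
    [MulAction G V] [Finite V] [IsPretransitive G V] {Γ : SimpleGraph V} (hconn : Γ.Preconnected)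
    (hΓ : ∀ (g : G) (x y : V), Γ.Adj (g • x) (g • y) ↔ Γ.Adj x y) {p k n : ℕ} [hp : Fact p.Prime]
    (hn : 0 < n) (hV : Nat.card V = k * p ^ n) (v : V) (hd : n + 1 < Nat.card (Γ.neighborSet v))
    {L : Subgroup (Equiv.Perm (Γ.neighborSet v))}
    (hLG : ∀ σ ∈ L, ∃ g : G, g • v = v ∧ ∀ u : Γ.neighborSet v, (σ u : V) = g • (u : V))
    (hL : ∀ a b : Γ.neighborSet v, ∃ σ ∈ L, σ a = b)
    (hL2 : ∀ a b c : Γ.neighborSet v, b ≠ a → c ≠ a → ∃ σ ∈ L, σ a = a ∧ σ b = c) :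
    p ≤ k * Nat.card (stabilizer G v) := by
  by_contra! hlt
  have : Nonempty V := ⟨v⟩
  obtain ⟨P, hPn, hPcard, hPindex, hfree⟩ :=
    exists_normal_free_subgroup_of_mul_card_stabilizer_lt hV v hlt
  obtain ⟨u₀⟩ : Nonempty (Γ.neighborSet v) := Nat.card_pos_iff.mp (by omega) |>.1
  have hk : 0 < k := Nat.pos_of_mul_pos_right (Nat.card_pos.trans_eq hV)
  have hLp : Nat.card L < p := (card_le_card_stabilizer_of_forall_exists hLG).trans_lt <|
    (Nat.le_mul_of_pos_left _ hk).trans_lt hlt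
  have hdL := Nat.le_of_dvd Nat.card_pos (card_dvd_card_of_transitive hL u₀)
  have : Nontrivial P := Finite.one_lt_card_iff_nontrivial.mp
    (hPcard ▸ Nat.one_lt_pow hn.ne' hp.out.one_lt)
  have : Nontrivial (ModPAbelianization P p) := nontrivial (IsPGroup.of_card hPcard)
  obtain ⟨ψ, hψP, C, hψ⟩ := exists_affine_equivariant (m := of (p := p)) hfree of_mul
    smul_of smul_eq_self_of_mem (exists_mul_nsmul_eq_self hPindex)
  have hψL : ∀ σ ∈ L, ∃ α : ModPAbelianization P p →ₗ[ZMod p] ModPAbelianization P p, ∃ c,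
      ∀ u, ψ (σ u) = α (ψ u) + c := fun σ hσ => by
    obtain ⟨g, -, hg⟩ := hLG σ hσ
    exact ⟨(DistribSMul.toAddMonoidHom _ g).toZModLinearMap p, C g, fun u => by
      rw [hg, hψ]; rfl⟩
  rcases forall_eq_or_card_le_of_isTwoTransitive hL hL2
    (fun h => (Nat.le_of_dvd Nat.card_pos h).not_gt hLp) (fun u => ψ u) hψL with hconst | hcard
  · have hc : ∀ u, Γ.Adj v u → ψ u = ψ v + (ψ u₀ - ψ v) := fun u hu => by
      rw [hconst ⟨u, hu⟩ u₀, add_sub_cancel]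
    obtain ⟨a, ha⟩ := exists_ne (0 : ModPAbelianization P p)
    obtain ⟨π, rfl⟩ := of_surjective a
    have h2 := two_nsmul_sub_eq_of_forall_adj hconn hΓ hψ hc ⟨u₀, u₀.2⟩ π
    rw [← Subgroup.smul_def, hψP, add_sub_cancel_right, smul_eq_self_of_mem, sub_self] at h2
    exact ha (eq_zero_of_two_nsmul_eq_zero (p := p) (by omega) h2)
  · have hAP : Nat.card (ModPAbelianization P p) ≤ p ^ n :=
      hPcard ▸ Nat.card_le_card_of_surjective _ of_surjective
    have := (Nat.pow_le_pow_iff_right hp.out.one_lt).mp (hcard.trans hAP)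
    omega

theorem card_stabilizer_eq_card_inf {M α : Type*} [Group M] [MulAction M α] (H : Subgroup M)
    (x : α) : Nat.card (stabilizer H x) = Nat.card ↥(H ⊓ stabilizer M x) :=
  Nat.card_congr
    { toFun := fun g => ⟨g.1.1, g.1.2, g.2⟩
      invFun := fun g => ⟨⟨g.1, g.2.1⟩, g.2.2⟩
      left_inv := fun _ => rfl
      right_inv := fun _ => rfl }

/-- There exists a function `h : ℕ → ℕ` such that, whenever `k`, `n`, `d` are positive
integers with `d > h n`, `p` is a prime, `Γ` is a finite connected simple graph with
exactly `k * p ^ n` vertices, regular of valency `d`, `G` is a vertex-transitive group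
of automorphisms of `Γ`, and the permutation group `L` induced by the stabiliser `G_v`
on the neighbourhood `Γ(v)` of a vertex `v` is `2`-transitive with an abelian regular
normal subgroup (i.e. `L` is affine), then `p ≤ k * |G_v|`. -/
theorem stmt16 :
    ∃ h : ℕ → ℕ,
      ∀ k n d p : ℕ, 0 < k → 0 < n → 0 < d → d > h n → p.Prime →
      ∀ (V : Type) (Γ : SimpleGraph V), Γ.Connected →
        Nat.card V = k * p ^ n →
        (∀ w : V, Nat.card (Γ.neighborSet w) = d) →
        ∀ G : Subgroup (Equiv.Perm V),
          (∀ g ∈ G, ∀ u w : V, Γ.Adj (g u) (g w) ↔ Γ.Adj u w) →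
          (∀ u w : V, ∃ g ∈ G, g u = w) →
          ∀ (v : V) (L : Subgroup (Equiv.Perm (Γ.neighborSet v))),
            (∀ σ : Equiv.Perm (Γ.neighborSet v), σ ∈ L ↔
              ∃ g ∈ G, g v = v ∧ ∀ u : Γ.neighborSet v, (σ u : V) = g (u : V)) →
            (∀ a b : Γ.neighborSet v, ∃ σ ∈ L, σ a = b) →
            (∀ a b c : Γ.neighborSet v, b ≠ a → c ≠ a →
              ∃ σ ∈ L, σ a = a ∧ σ b = c) →
            (∃ N : Subgroup (Equiv.Perm (Γ.neighborSet v)), N ≤ L ∧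
              (∀ σ ∈ L, ∀ τ ∈ N, σ * τ * σ⁻¹ ∈ N) ∧
              (∀ τ₁ ∈ N, ∀ τ₂ ∈ N, τ₁ * τ₂ = τ₂ * τ₁) ∧
              (∀ a b : Γ.neighborSet v,
                ∃! τ : Equiv.Perm (Γ.neighborSet v), τ ∈ N ∧ τ a = b)) →
            p ≤ k * Nat.card ↥(G ⊓ MulAction.stabilizer (Equiv.Perm V) v) := by
  refine ⟨fun n => n + 1, fun k n d p hk hn _ hdh hp V Γ hconn hV hreg G hAut hTrans v L hL hLtrans
    hL2 _ => ?_⟩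
  have : Fact p.Prime := ⟨hp⟩
  have : Finite V :=
    Nat.finite_of_card_ne_zero (hV ▸ Nat.mul_ne_zero hk.ne' (pow_ne_zero _ hp.ne_zero))
  have : IsPretransitive G V := ⟨fun x y => by
    obtain ⟨g, hg, h⟩ := hTrans x y
    exact ⟨⟨g, hg⟩, h⟩⟩
  rw [← card_stabilizer_eq_card_inf]
  refine le_mul_card_stabilizer_of_isTwoTransitive hconn.preconnected (fun g => hAut g.1 g.2) hn
    hV v (hreg v ▸ hdh) (fun σ hσ => ?_) hLtrans hL2
  obtain ⟨g, hg, hgv, hσg⟩ := (hL σ).mp hσ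
  exact ⟨⟨g, hg⟩, hgv, hσg⟩
end Transitive
end
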